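/- arXiv:2511.15441 — 8 statements merged into one kernel-verified Lean document; each statement's English description precedes it below -/
import Mathlib

section
/- For any positive integers r < s, the identity 1 - 2·r!·(s-r)!/(s!·(s-1)) - Σ_{t=1}^{s-r-1} C(s-r, t)·(t!·(s-t)! + (t+r)!·(s-t-r)!)/(s!·(s-1)) = (s+1)(r-1)/((s-1)(r+1)) holds. -/
open Finset

private lemma key1 (m r t : ℕ) (ht : t ≤ m) :
    m.choose t * (t.factorial * (m + r - t).factorial)
      = m.factorial * r.factorial * ((m + r - t).choose r) := by
  have h1 : m.choose t * t.factorial * (m - t).factorial = m.factorial :=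
    Nat.choose_mul_factorial_mul_factorial ht
  have hr' : r ≤ m + r - t := by omega
  have h2 : (m + r - t).choose r * r.factorial * (m + r - t - r).factorial
      = (m + r - t).factorial := Nat.choose_mul_factorial_mul_factorial hr'
  have h3 : m + r - t - r = m - t := by omega
  rw [h3] at h2
  apply Nat.eq_of_mul_eq_mul_right (Nat.factorial_pos (m - t))
  calc m.choose t * (t.factorial * (m + r - t).factorial) * (m - t).factorial
      = (m.choose t * t.factorial * (m - t).factorial) * (m + r - t).factorial := by ring
    _ = m.factorial * ((m + r - t).choose r * r.factorial * (m - t).factorial) := by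
        rw [h1, h2]
    _ = m.factorial * r.factorial * ((m + r - t).choose r) * (m - t).factorial := by ring

private lemma key2 (m r t : ℕ) (ht : t ≤ m) :
    m.choose t * ((t + r).factorial * (m - t).factorial)
      = m.factorial * r.factorial * ((t + r).choose r) := by
  have h1 : m.choose t * t.factorial * (m - t).factorial = m.factorial :=
    Nat.choose_mul_factorial_mul_factorial ht
  have hr' : r ≤ t + r := by omega
  have h2 : (t + r).choose r * r.factorial * (t + r - r).factorial = (t + r).factorial :=
    Nat.choose_mul_factorial_mul_factorial hr'
  have h3 : t + r - r = t := by omega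
  rw [h3] at h2
  apply Nat.eq_of_mul_eq_mul_right (Nat.factorial_pos t)
  calc m.choose t * ((t + r).factorial * (m - t).factorial) * t.factorial
      = (m.choose t * t.factorial * (m - t).factorial) * (t + r).factorial := by ring
    _ = m.factorial * ((t + r).choose r * r.factorial * t.factorial) := by rw [h1, h2]
    _ = m.factorial * r.factorial * ((t + r).choose r) * t.factorial := by ring

private lemma hock (r : ℕ) : ∀ n : ℕ,
    (∑ i ∈ range n, (i + r + 1).choose r) + 1 = (n + r + 1).choose (r + 1)
  | 0 => by simp
  | (n + 1) => by
    rw [Finset.sum_range_succ]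
    have h := hock r n
    have h3 : n + 1 + r + 1 = (n + r + 1) + 1 := by omega
    have hp : (n + r + 1 + 1).choose (r + 1)
        = (n + r + 1).choose r + (n + r + 1).choose (r + 1) := Nat.choose_succ_succ _ _
    rw [h3, hp]
    omega

private lemma key3 (m r : ℕ) (hm : 1 ≤ m) :
    (r + 1) * (m.factorial * r.factorial * (m + r).choose (r + 1)) = m * (m + r).factorial := by
  have h1 : (m + r).choose (r + 1) * (r + 1).factorial * (m + r - (r + 1)).factorial
      = (m + r).factorial := Nat.choose_mul_factorial_mul_factorial (by omega)
  have h2 : m + r - (r + 1) = m - 1 := by omega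
  rw [h2] at h1
  have hm' : m.factorial = m * (m - 1).factorial := by
    obtain ⟨k, rfl⟩ : ∃ k, m = k + 1 := ⟨m - 1, by omega⟩
    simp [Nat.factorial_succ]
  have hr' : (r + 1).factorial = (r + 1) * r.factorial := Nat.factorial_succ r
  calc (r + 1) * (m.factorial * r.factorial * (m + r).choose (r + 1))
      = m * ((m + r).choose (r + 1) * ((r + 1) * r.factorial) * (m - 1).factorial) := by
        rw [hm']; ring
    _ = m * ((m + r).choose (r + 1) * (r + 1).factorial * (m - 1).factorial) := by rw [hr']
    _ = m * (m + r).factorial := by rw [h1]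

private lemma sumS (m r : ℕ) (hm : 1 ≤ m) :
    (r + 1) * ((∑ t ∈ Icc 1 (m - 1),
        m.choose t * (t.factorial * (m + r - t).factorial
          + (t + r).factorial * (m - t).factorial))
      + 2 * (r.factorial * m.factorial))
    = 2 * m * (m + r).factorial := by
  have hicc : Icc 1 (m - 1) = Ico 1 m := by ext x; simp only [Finset.mem_Icc, Finset.mem_Ico]; omega
  rw [hicc, Finset.sum_Ico_eq_sum_range]
  have hpt : ∀ i ∈ range (m - 1),
      m.choose (1 + i) * ((1 + i).factorial * (m + r - (1 + i)).factorial
          + (1 + i + r).factorial * (m - (1 + i)).factorial)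
      = m.factorial * r.factorial
          * ((m + r - (1 + i)).choose r + (1 + i + r).choose r) := by
    intro i hi
    have hi' : 1 + i ≤ m := by
      simp only [Finset.mem_range] at hi; omega
    rw [Nat.mul_add, key1 m r (1 + i) hi', key2 m r (1 + i) hi', ← Nat.mul_add]
  rw [Finset.sum_congr rfl hpt, ← Finset.mul_sum, Finset.sum_add_distrib]
  have hrefl : ∑ i ∈ range (m - 1), (m + r - (1 + i)).choose r
      = ∑ i ∈ range (m - 1), (i + r + 1).choose r := by
    rw [← Finset.sum_range_reflect]
    apply Finset.sum_congr rfl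
    intro i hi
    simp only [Finset.mem_range] at hi
    congr 1
    omega
  rw [hrefl]
  have h2 : ∀ i, (1 + i + r).choose r = (i + r + 1).choose r := by
    intro i; congr 1; omega
  simp only [h2]
  have hh := hock r (m - 1)
  have h3 : m - 1 + r + 1 = m + r := by omega
  rw [h3] at hh
  have k3 := key3 m r hm
  rw [← hh] at k3
  have hring : (r + 1) * (m.factorial * r.factorial
        * ((∑ i ∈ range (m - 1), (i + r + 1).choose r)
          + (∑ i ∈ range (m - 1), (i + r + 1).choose r))
        + 2 * (r.factorial * m.factorial))
      = 2 * ((r + 1) * (m.factorial * r.factorial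
          * ((∑ i ∈ range (m - 1), (i + r + 1).choose r) + 1))) := by ring
  rw [hring, k3]
  ring

theorem coopetition_combinatorial_identity (r s : ℕ) (hr : 1 ≤ r) (hrs : r < s) :
    (1 : ℝ)
      - 2 * (Nat.factorial r : ℝ) * (Nat.factorial (s - r) : ℝ)
          / ((Nat.factorial s : ℝ) * ((s : ℝ) - 1))
      - ∑ t ∈ Finset.Icc 1 (s - r - 1),
          (Nat.choose (s - r) t : ℝ) *
            ((Nat.factorial t : ℝ) * (Nat.factorial (s - t) : ℝ)
              + (Nat.factorial (t + r) : ℝ) * (Nat.factorial (s - t - r) : ℝ))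
            / ((Nat.factorial s : ℝ) * ((s : ℝ) - 1))
    = ((s : ℝ) + 1) * ((r : ℝ) - 1) / (((s : ℝ) - 1) * ((r : ℝ) + 1)) := by
  obtain ⟨m, rfl⟩ : ∃ m, s = m + r := ⟨s - r, by omega⟩
  have hm : 1 ≤ m := by omega
  have hmr : m + r - r = m := by omega
  rw [hmr]
  have hsum : ∀ t ∈ Icc 1 (m - 1),
      (Nat.choose m t : ℝ) *
          ((Nat.factorial t : ℝ) * (Nat.factorial (m + r - t) : ℝ)
            + (Nat.factorial (t + r) : ℝ) * (Nat.factorial (m + r - t - r) : ℝ))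
          / ((Nat.factorial (m + r) : ℝ) * (((m + r : ℕ) : ℝ) - 1))
      = ((m.choose t * (t.factorial * (m + r - t).factorial
            + (t + r).factorial * (m - t).factorial) : ℕ) : ℝ)
          / ((Nat.factorial (m + r) : ℝ) * (((m + r : ℕ) : ℝ) - 1)) := by
    intro t ht
    have h1 : m + r - t - r = m - t := by omega
    rw [h1]
    push_cast
    ring
  rw [Finset.sum_congr rfl hsum, ← Finset.sum_div, ← Nat.cast_sum]
  have key := sumS m r hm
  have keyR : ((r : ℝ) + 1) * ((∑ t ∈ Icc 1 (m - 1),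
        m.choose t * (t.factorial * (m + r - t).factorial
          + (t + r).factorial * (m - t).factorial) : ℕ)
      + 2 * ((r.factorial : ℝ) * (m.factorial : ℝ)))
      = 2 * (m : ℝ) * ((m + r).factorial : ℝ) := by
    exact_mod_cast congrArg (Nat.cast : ℕ → ℝ) key
  have hd1 : ((Nat.factorial (m + r) : ℝ)) ≠ 0 := by
    exact_mod_cast (Nat.factorial_pos (m + r)).ne'
  have hd2 : (((m + r : ℕ) : ℝ) - 1) ≠ 0 := by
    have : (2 : ℝ) ≤ ((m + r : ℕ) : ℝ) := by exact_mod_cast (by omega : 2 ≤ m + r)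
    linarith
  have hd3 : ((r : ℝ) + 1) ≠ 0 := by positivity
  push_cast at hd2 ⊢
  field_simp
  push_cast at keyR ⊢
  linear_combination (-1 : ℝ) * keyR
end

section
/- Let v be a monotone TU-game on N, S ⊆ N with |S| ≥ 2, T ⊆ N∖S, and suppose v(S∪T) > v(T) (S is T-contributing). Let p_S be a probability distribution with full support on the unordered 2-partitions of S. Then the attitude A^v_p(S,T) equals v(S∪T) - v(T) if and only if v(P∪T) = v(T) for every proper nonempty subcoalition P ⊊ S (i.e., S is an essential T-contributing coalition). -/
open Finset

/-- The set of unordered 2-partitions of `S` into two nonempty disjoint parts. -/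
def Pi2 {ι : Type*} [DecidableEq ι] (S : Finset ι) : Finset (Finset (Finset ι)) :=
  (S.powerset.filter fun R => R ≠ ∅ ∧ R ≠ S).image fun R => {R, S \ R}

/-- The attitude of coalition `S` towards `T` under internal distribution `p` on `Pi2 S`. -/
def attitude {ι : Type*} [DecidableEq ι] (v : Finset ι → ℝ) (p : Finset (Finset ι) → ℝ)
    (S T : Finset ι) : ℝ :=
  v (S ∪ T) - v T - ∑ π ∈ Pi2 S, p π * ((∑ B ∈ π, v (B ∪ T)) - 2 * v T)

/-!
Each term of the sum defining the attitude is `p π` times the surplus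
`v (R ∪ T) + v (S \ R ∪ T) - 2 v T` of a 2-partition `{R, S \ R}`, and by monotonicity both
`v (R ∪ T)` and `v (S \ R ∪ T)` are at least `v T`. So the attitude equals the marginal
contribution exactly when every surplus vanishes (the weights being positive), i.e. when every
proper nonempty part `R` of `S` satisfies `v (R ∪ T) = v T`.
-/

section
variable {ι : Type*} [DecidableEq ι]

theorem forall_mem_Pi2_iff {S : Finset ι} {Q : Finset (Finset ι) → Prop} :
    (∀ π ∈ Pi2 S, Q π) ↔ ∀ R ⊆ S, R ≠ ∅ → R ≠ S → Q {R, S \ R} := by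
  simp only [Pi2, forall_mem_image, mem_filter, mem_powerset, and_imp]

theorem pair_mem_Pi2 {R S : Finset ι} (hRS : R ⊆ S) (hR : R ≠ ∅) (hR' : R ≠ S) :
    {R, S \ R} ∈ Pi2 S :=
  mem_image_of_mem _ (mem_filter.mpr ⟨mem_powerset.mpr hRS, hR, hR'⟩)

theorem sum_pair_sdiff {β : Type*} [AddCommMonoid β] {R : Finset ι} (S : Finset ι)
    (hR : R ≠ ∅) (f : Finset ι → β) :
    ∑ B ∈ ({R, S \ R} : Finset (Finset ι)), f B = f R + f (S \ R) := by
  refine sum_pair fun h => hR ?_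
  have : Disjoint R (S \ R) := disjoint_sdiff
  rwa [← h, disjoint_self, bot_eq_empty] at this

variable {v : Finset ι → ℝ} {S T : Finset ι}

theorem attitude_eq_marginal_iff_sum_eq_zero {p : Finset (Finset ι) → ℝ} :
    attitude v p S T = v (S ∪ T) - v T ↔
      ∑ π ∈ Pi2 S, p π * ((∑ B ∈ π, v (B ∪ T)) - 2 * v T) = 0 := by
  rw [attitude, sub_eq_self]

theorem pair_surplus_eq_zero_iff (hge : ∀ P ⊆ S, v T ≤ v (P ∪ T)) {R : Finset ι}
    (hRS : R ⊆ S) (hR : R ≠ ∅) :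
    ∑ B ∈ ({R, S \ R} : Finset (Finset ι)), v (B ∪ T) - 2 * v T = 0 ↔
      v (R ∪ T) = v T ∧ v (S \ R ∪ T) = v T := by
  have h₁ := hge R hRS
  have h₂ := hge (S \ R) sdiff_subset
  rw [sum_pair_sdiff S hR]
  constructor
  · intro h
    constructor <;> linarith
  · rintro ⟨e₁, e₂⟩
    linarith

theorem pair_surplus_nonneg (hge : ∀ P ⊆ S, v T ≤ v (P ∪ T)) :
    ∀ π ∈ Pi2 S, 0 ≤ ∑ B ∈ π, v (B ∪ T) - 2 * v T := by
  refine forall_mem_Pi2_iff.mpr fun R hRS hR _ => ?_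
  rw [sum_pair_sdiff S hR]
  linarith [hge R hRS, hge (S \ R) sdiff_subset]

end

theorem attitude_eq_marginal_iff_essential_general {ι : Type*} [DecidableEq ι]
    (N S T : Finset ι) (v : Finset ι → ℝ) (p : Finset (Finset ι) → ℝ)
    (hmono : ∀ A B : Finset ι, A ⊆ B → B ⊆ N → v A ≤ v B)
    (hSN : S ⊆ N) (hT : T ⊆ N \ S)
    (hppos : ∀ π ∈ Pi2 S, 0 < p π) :
    attitude v p S T = v (S ∪ T) - v T ↔
      ∀ P : Finset ι, P ⊆ S → P ≠ ∅ → P ≠ S → v (P ∪ T) = v T := by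
  have hge : ∀ P ⊆ S, v T ≤ v (P ∪ T) := fun P hPS =>
    hmono _ _ subset_union_right (union_subset (hPS.trans hSN) (hT.trans sdiff_subset))
  rw [attitude_eq_marginal_iff_sum_eq_zero, sum_eq_zero_iff_of_nonneg fun π hπ =>
    mul_nonneg (hppos π hπ).le (pair_surplus_nonneg hge π hπ)]
  constructor
  · intro h P hPS hP hPS'
    have hπ := pair_mem_Pi2 hPS hP hPS'
    have hzero := (mul_eq_zero_iff_left (hppos _ hπ).ne').mp (h _ hπ)
    exact ((pair_surplus_eq_zero_iff hge hPS hP).mp hzero).1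
  · refine fun h => forall_mem_Pi2_iff.mpr fun R hRS hR hRS' => mul_eq_zero_of_right _ ?_
    have hR₀ : S \ R ≠ ∅ := fun hempty =>
      hRS' (hRS.antisymm (sdiff_eq_empty_iff_subset.mp hempty))
    have hRS₀ : S \ R ≠ S := (sdiff_ssubset hRS (nonempty_iff_ne_empty.mpr hR)).ne
    exact (pair_surplus_eq_zero_iff hge hRS hR).mpr
      ⟨h R hRS hR hRS', h (S \ R) sdiff_subset hR₀ hRS₀⟩

theorem attitude_eq_marginal_iff_essential {ι : Type*} [DecidableEq ι]
    (N S T : Finset ι) (v : Finset ι → ℝ) (p : Finset (Finset ι) → ℝ)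
    (hv0 : v ∅ = 0) (hmono : ∀ A B : Finset ι, A ⊆ B → B ⊆ N → v A ≤ v B)
    (hSN : S ⊆ N) (h2 : 2 ≤ S.card) (hT : T ⊆ N \ S)
    (hcontrib : v T < v (S ∪ T))
    (hp1 : ∑ π ∈ Pi2 S, p π = 1) (hppos : ∀ π ∈ Pi2 S, 0 < p π) :
    attitude v p S T = v (S ∪ T) - v T ↔
      ∀ P : Finset ι, P ⊆ S → P ≠ ∅ → P ≠ S → v (P ∪ T) = v T :=
  attitude_eq_marginal_iff_essential_general N S T v p hmono hSN hT hppos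
end

section
/- Let v be a monotone TU-game on N, S ⊆ N with |S| ≥ 2, and let p, q be families of probability distributions (p_S on the 2-partitions of S, q_S on subsets of N∖S). Then -Φ^v_q(S) ≤ C^v_{p,q}(S) ≤ Φ^v_q(S), where Φ^v_q(S) = Σ_{T⊆N∖S} q_S(T)·(v(S∪T) - v(T)) is the probabilistic generalized value and C^v_{p,q}(S) = Σ_{T⊆N∖S} q_S(T)·A^v_p(S,T) is the coopetition index. -/
open Finset

/-- The probabilistic generalized value of `S` in the game `v` on `N`,
under external distribution `q` on subsets of `N \ S`. -/
def genValue {ι : Type*} [DecidableEq ι] (v : Finset ι → ℝ) (q : Finset ι → ℝ)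
    (N S : Finset ι) : ℝ :=
  ∑ T ∈ (N \ S).powerset, q T * (v (S ∪ T) - v T)

/-- The coopetition index of `S` in the game `v` on `N`. -/
def coop {ι : Type*} [DecidableEq ι] (v : Finset ι → ℝ) (p : Finset (Finset ι) → ℝ)
    (q : Finset ι → ℝ) (N S : Finset ι) : ℝ :=
  ∑ T ∈ (N \ S).powerset, q T * attitude v p S T

/-! Monotonicity puts each part of a 2-partition `{B₁, B₂}` of `S` between `∅` and `S`, so the
surplus `v (B₁ ∪ T) + v (B₂ ∪ T) - 2 v T` lies in `[0, 2 Δ]` with `Δ = v (S ∪ T) - v T`. Its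
`p`-average then also lies in `[0, 2 Δ]`, hence `|A^v_p(S,T)| ≤ Δ`, and averaging over `T`
with `q` gives `|C^v_{p,q}(S)| ≤ Φ^v_q(S)`. -/

section

variable {ι : Type*} [DecidableEq ι]

lemma card_eq_two_of_mem_Pi2 {S : Finset ι} {π : Finset (Finset ι)} (hπ : π ∈ Pi2 S) :
    π.card = 2 := by
  simp only [Pi2, mem_image, mem_filter, mem_powerset] at hπ
  obtain ⟨R, ⟨-, hR, -⟩, rfl⟩ := hπ
  refine card_pair fun hRS => ?_
  obtain ⟨x, hx⟩ := nonempty_iff_ne_empty.2 hR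
  exact (mem_sdiff.1 (hRS ▸ hx)).2 hx

lemma subset_of_mem_of_mem_Pi2 {S B : Finset ι} {π : Finset (Finset ι)} (hπ : π ∈ Pi2 S)
    (hB : B ∈ π) : B ⊆ S := by
  simp only [Pi2, mem_image, mem_filter, mem_powerset] at hπ
  obtain ⟨R, ⟨hRS, -⟩, rfl⟩ := hπ
  rcases mem_insert.1 hB with rfl | hB
  · exact hRS
  · exact mem_singleton.1 hB ▸ sdiff_subset

lemma sum_sub_mem_Icc_of_forall_subset {N S T : Finset ι} {v : Finset ι → ℝ}
    (hmono : ∀ A B : Finset ι, A ⊆ B → B ⊆ N → v A ≤ v B) (hSN : S ⊆ N) (hTN : T ⊆ N)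
    {π : Finset (Finset ι)} (hπ : ∀ B ∈ π, B ⊆ S) :
    ∑ B ∈ π, (v (B ∪ T) - v T) ∈ Set.Icc 0 (π.card * (v (S ∪ T) - v T)) := by
  have hle : ∀ B ∈ π, v T ≤ v (B ∪ T) ∧ v (B ∪ T) ≤ v (S ∪ T) := fun B hB =>
    ⟨hmono _ _ subset_union_right (union_subset ((hπ B hB).trans hSN) hTN),
      hmono _ _ (union_subset_union_left (hπ B hB)) (union_subset hSN hTN)⟩
  constructor
  · exact sum_nonneg fun B hB => sub_nonneg.2 (hle B hB).1
  · calc ∑ B ∈ π, (v (B ∪ T) - v T) ≤ ∑ _B ∈ π, (v (S ∪ T) - v T) :=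
          sum_le_sum fun B hB => sub_le_sub_right (hle B hB).2 _
      _ = π.card * (v (S ∪ T) - v T) := by rw [sum_const, nsmul_eq_mul]

lemma partition_surplus_mem_Icc {N S T : Finset ι} {v : Finset ι → ℝ}
    (hmono : ∀ A B : Finset ι, A ⊆ B → B ⊆ N → v A ≤ v B) (hSN : S ⊆ N) (hTN : T ⊆ N)
    {π : Finset (Finset ι)} (hπ : π ∈ Pi2 S) :
    (∑ B ∈ π, v (B ∪ T)) - 2 * v T ∈ Set.Icc 0 (2 * (v (S ∪ T) - v T)) := by
  have h := sum_sub_mem_Icc_of_forall_subset hmono hSN hTN fun B => subset_of_mem_of_mem_Pi2 hπ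
  rwa [sum_sub_distrib, sum_const, card_eq_two_of_mem_Pi2 hπ, nsmul_eq_mul, Nat.cast_ofNat]
    at h

theorem abs_attitude_le {N S T : Finset ι} {v : Finset ι → ℝ} {p : Finset (Finset ι) → ℝ}
    (hmono : ∀ A B : Finset ι, A ⊆ B → B ⊆ N → v A ≤ v B) (hSN : S ⊆ N) (hTN : T ⊆ N)
    (hp1 : ∑ π ∈ Pi2 S, p π = 1) (hp0 : ∀ π ∈ Pi2 S, 0 ≤ p π) :
    |attitude v p S T| ≤ v (S ∪ T) - v T := by
  have havg : ∑ π ∈ Pi2 S, p π * ((∑ B ∈ π, v (B ∪ T)) - 2 * v T) ∈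
      Set.Icc 0 (2 * (v (S ∪ T) - v T)) := by
    simpa only [smul_eq_mul] using (convex_Icc _ _).sum_mem hp0 hp1
      fun π hπ => partition_surplus_mem_Icc hmono hSN hTN hπ
  rw [attitude, abs_le]
  constructor <;> linarith [havg.1, havg.2]

theorem abs_coop_le_genValue {N S : Finset ι} {v : Finset ι → ℝ} {p : Finset (Finset ι) → ℝ}
    {q : Finset ι → ℝ} (hmono : ∀ A B : Finset ι, A ⊆ B → B ⊆ N → v A ≤ v B) (hSN : S ⊆ N)
    (hp1 : ∑ π ∈ Pi2 S, p π = 1) (hp0 : ∀ π ∈ Pi2 S, 0 ≤ p π)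
    (hq0 : ∀ T ∈ (N \ S).powerset, 0 ≤ q T) :
    |coop v p q N S| ≤ genValue v q N S := by
  refine (abs_sum_le_sum_abs _ _).trans (sum_le_sum fun T hT => ?_)
  have hTN : T ⊆ N := (mem_powerset.1 hT).trans sdiff_subset
  rw [abs_mul, abs_of_nonneg (hq0 T hT)]
  exact mul_le_mul_of_nonneg_left (abs_attitude_le hmono hSN hTN hp1 hp0) (hq0 T hT)

end

theorem coop_bounds_general {ι : Type*} [DecidableEq ι]
    (N S : Finset ι) (v : Finset ι → ℝ)
    (p : Finset (Finset ι) → ℝ) (q : Finset ι → ℝ)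
    (hmono : ∀ A B : Finset ι, A ⊆ B → B ⊆ N → v A ≤ v B)
    (hSN : S ⊆ N)
    (hp1 : ∑ π ∈ Pi2 S, p π = 1) (hp0 : ∀ π ∈ Pi2 S, 0 ≤ p π)
    (hq0 : ∀ T ∈ (N \ S).powerset, 0 ≤ q T) :
    -genValue v q N S ≤ coop v p q N S ∧ coop v p q N S ≤ genValue v q N S :=
  abs_le.1 (abs_coop_le_genValue hmono hSN hp1 hp0 hq0)

theorem coop_bounds {ι : Type*} [DecidableEq ι]
    (N S : Finset ι) (v : Finset ι → ℝ)
    (p : Finset (Finset ι) → ℝ) (q : Finset ι → ℝ)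
    (hv0 : v ∅ = 0) (hmono : ∀ A B : Finset ι, A ⊆ B → B ⊆ N → v A ≤ v B)
    (hSN : S ⊆ N) (h2 : 2 ≤ S.card)
    (hp1 : ∑ π ∈ Pi2 S, p π = 1) (hp0 : ∀ π ∈ Pi2 S, 0 ≤ p π)
    (hq1 : ∑ T ∈ (N \ S).powerset, q T = 1) (hq0 : ∀ T ∈ (N \ S).powerset, 0 ≤ q T) :
    -genValue v q N S ≤ coop v p q N S ∧ coop v p q N S ≤ genValue v q N S :=
  coop_bounds_general N S v p q hmono hSN hp1 hp0 hq0
end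

section
/- Let v be a monotone TU-game on N, and suppose that for every T ⊆ N∖S with v(S∪T) > v(T), every proper nonempty subcoalition P ⊊ S satisfies v(P∪T) = v(T). Then for any internal family p and external family q, the coopetition index C^v_{p,q}(S) equals the probabilistic generalized value Φ^v_q(S). -/
open Finset

/-!
Every proper nonempty `P ⊊ S` is null towards every external coalition `T`:
when `S` is essential for `T` this is the hypothesis, and otherwise `v (S ∪ T) = v T`, so
monotonicity squeezes `v (P ∪ T)` between `v T` and `v (S ∪ T)`. Both blocks of a 2-partition of
`S` are such `P`, so every pairwise term of the attitude vanishes and the attitude reduces to the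
marginal contribution `v (S ∪ T) - v T`, term by term in `T`.
-/

section Pi2

variable {ι : Type*} [DecidableEq ι] {S : Finset ι} {π : Finset (Finset ι)}

theorem card_of_mem_Pi2 (hπ : π ∈ Pi2 S) : #π = 2 := by
  obtain ⟨R, hR, rfl⟩ := mem_image.mp hπ
  obtain ⟨-, hR0, -⟩ := mem_filter.mp hR
  refine card_pair fun h => hR0 ?_
  simpa [← h] using (disjoint_sdiff : Disjoint R (S \ R))

theorem subset_ne_empty_ne_of_mem_Pi2 (hπ : π ∈ Pi2 S) {B : Finset ι} (hB : B ∈ π) :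
    B ⊆ S ∧ B ≠ ∅ ∧ B ≠ S := by
  obtain ⟨R, hR, rfl⟩ := mem_image.mp hπ
  obtain ⟨hRS, hR0, hRS'⟩ := mem_filter.mp hR
  rw [mem_powerset] at hRS
  rcases mem_insert.mp hB with rfl | hB
  · exact ⟨hRS, hR0, hRS'⟩
  · rw [mem_singleton.mp hB]
    refine ⟨sdiff_subset, fun h => hRS' (hRS.antisymm (sdiff_eq_empty_iff_subset.mp h)), ?_⟩
    intro h
    rw [_root_.sdiff_eq_self_iff_disjoint] at h
    exact hR0 (disjoint_self.mp (h.mono_right hRS))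

end Pi2

theorem attitude_eq_of_forall_proper_null {ι : Type*} [DecidableEq ι] (v : Finset ι → ℝ)
    (p : Finset (Finset ι) → ℝ) {S T : Finset ι}
    (hnull : ∀ P ⊆ S, P ≠ ∅ → P ≠ S → v (P ∪ T) = v T) :
    attitude v p S T = v (S ∪ T) - v T := by
  have hpair : ∀ π ∈ Pi2 S, ∑ B ∈ π, v (B ∪ T) = 2 * v T := fun π hπ => by
    have hblock : ∀ B ∈ π, v (B ∪ T) = v T := fun B hB => by
      obtain ⟨hBS, hB0, hBS'⟩ := subset_ne_empty_ne_of_mem_Pi2 hπ hB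
      exact hnull B hBS hB0 hBS'
    rw [sum_congr rfl hblock, sum_const, card_of_mem_Pi2 hπ, nsmul_eq_mul, Nat.cast_ofNat]
  rw [attitude, sum_eq_zero fun π hπ => by rw [hpair π hπ, sub_self, mul_zero], sub_zero]

theorem map_union_eq_of_map_union_le {ι : Type*} [DecidableEq ι] {N S T P : Finset ι}
    {v : Finset ι → ℝ} (hmono : ∀ A B : Finset ι, A ⊆ B → B ⊆ N → v A ≤ v B)
    (hSTN : S ∪ T ⊆ N) (hle : v (S ∪ T) ≤ v T) (hPS : P ⊆ S) : v (P ∪ T) = v T :=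
  le_antisymm ((hmono _ _ (union_subset_union_left hPS) hSTN).trans hle)
    (hmono _ _ subset_union_right ((union_subset_union_left hPS).trans hSTN))

theorem coop_eq_genValue_of_essential_general {ι : Type*} [DecidableEq ι]
    (N S : Finset ι) (v : Finset ι → ℝ)
    (p : Finset (Finset ι) → ℝ) (q : Finset ι → ℝ)
    (hmono : ∀ A B : Finset ι, A ⊆ B → B ⊆ N → v A ≤ v B)
    (hSN : S ⊆ N)
    (hess : ∀ T ∈ (N \ S).powerset, v T < v (S ∪ T) →
      ∀ P : Finset ι, P ⊆ S → P ≠ ∅ → P ≠ S → v (P ∪ T) = v T) :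
    coop v p q N S = genValue v q N S := by
  refine sum_congr rfl fun T hT => congrArg (q T * ·) ?_
  have hTN : T ⊆ N := (mem_powerset.mp hT).trans sdiff_subset
  refine attitude_eq_of_forall_proper_null v p fun P hPS hP0 hPS' => ?_
  rcases lt_or_ge (v T) (v (S ∪ T)) with hlt | hle
  · exact hess T hT hlt P hPS hP0 hPS'
  · exact map_union_eq_of_map_union_le hmono (union_subset hSN hTN) hle hPS

theorem coop_eq_genValue_of_essential {ι : Type*} [DecidableEq ι]
    (N S : Finset ι) (v : Finset ι → ℝ)
    (p : Finset (Finset ι) → ℝ) (q : Finset ι → ℝ)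
    (hv0 : v ∅ = 0) (hmono : ∀ A B : Finset ι, A ⊆ B → B ⊆ N → v A ≤ v B)
    (hSN : S ⊆ N)
    (hp1 : ∑ π ∈ Pi2 S, p π = 1) (hp0 : ∀ π ∈ Pi2 S, 0 ≤ p π)
    (hq1 : ∑ T ∈ (N \ S).powerset, q T = 1) (hq0 : ∀ T ∈ (N \ S).powerset, 0 ≤ q T)
    (hess : ∀ T ∈ (N \ S).powerset, v T < v (S ∪ T) →
      ∀ P : Finset ι, P ⊆ S → P ≠ ∅ → P ≠ S → v (P ∪ T) = v T) :
    coop v p q N S = genValue v q N S :=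
  coop_eq_genValue_of_essential_general N S v p q hmono hSN hess
end

section
/- Let v be a TU-game on N, i ∈ N a null player, and S ⊆ N∖{i} with |S| ≥ 2. Suppose the families p and q satisfy: (1) (p_{S∪i}({S₁∪i,S₂}) + p_{S∪i}({S₁,S₂∪i}))/p_S({S₁,S₂}) = K_p is constant over all 2-partitions {S₁,S₂} of S; and (2) q_{S∪i}(T)/(q_S(T) + q_S(T∪i)) = K_q is constant over all T ⊆ N∖(S∪{i}). Then C^v_{p,q}(S∪{i}) = K_p·K_q·C^v_{p,q}(S). -/
open Finset

/-- The coopetition index of `S` in the game `v` on `N`, for families `p` (internal)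
and `q` (external) indexed by the coalition `S`. -/
def coopF {ι : Type*} [DecidableEq ι] (v : Finset ι → ℝ)
    (p : Finset ι → Finset (Finset ι) → ℝ) (q : Finset ι → Finset ι → ℝ)
    (N S : Finset ι) : ℝ :=
  ∑ T ∈ (N \ S).powerset, q S T * attitude v (p S) S T

namespace CoopAux

variable {ι : Type*} [DecidableEq ι]

lemma sdiff_mem_s1 {S R : Finset ι} (hR : R ⊆ S) (h0 : R ≠ ∅) (hS : R ≠ S) :
    S \ R ⊆ S ∧ S \ R ≠ ∅ ∧ S \ R ≠ S := by
  refine ⟨sdiff_subset, ?_, ?_⟩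
  · simp only [ne_eq, Finset.sdiff_eq_empty_iff_subset]
    intro h
    exact hS (subset_antisymm hR h)
  · intro h
    have : S \ (S \ R) = S \ S := by rw [h]
    rw [Finset.sdiff_sdiff_eq_self hR, Finset.sdiff_self] at this
    exact h0 this

lemma ne_sdiff_self {S R : Finset ι} (hR : R ⊆ S) (h0 : R ≠ ∅) : R ≠ S \ R := by
  intro h
  have : Disjoint R R := by nth_rewrite 2 [h]; exact disjoint_sdiff
  exact h0 (disjoint_self.mp this)

lemma helper1 (S : Finset ι) (F : Finset (Finset ι) → ℝ) :
    ∑ R ∈ S.powerset.filter (fun R => R ≠ ∅ ∧ R ≠ S), F {R, S \ R}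
      = 2 * ∑ π ∈ Pi2 S, F π := by
  classical
  rw [show (∑ R ∈ S.powerset.filter (fun R => R ≠ ∅ ∧ R ≠ S), F {R, S \ R})
      = ∑ R ∈ S.powerset.filter (fun R => R ≠ ∅ ∧ R ≠ S),
          F ((fun R => ({R, S \ R} : Finset (Finset ι))) R) from rfl,
    Finset.sum_comp]
  rw [Pi2, Finset.mul_sum]
  apply Finset.sum_congr rfl
  intro b hb
  obtain ⟨R₀, hR₀, rfl⟩ := Finset.mem_image.mp hb
  simp only [Finset.mem_filter, Finset.mem_powerset] at hR₀
  obtain ⟨hsub, h0, hS⟩ := hR₀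
  have hfib : Finset.filter
      (fun R => ({R, S \ R} : Finset (Finset ι)) = {R₀, S \ R₀})
      (S.powerset.filter (fun R => R ≠ ∅ ∧ R ≠ S)) = {R₀, S \ R₀} := by
    ext R
    simp only [Finset.mem_filter, Finset.mem_powerset, Finset.mem_insert,
      Finset.mem_singleton]
    constructor
    · rintro ⟨-, hEq⟩
      have : R ∈ ({R₀, S \ R₀} : Finset (Finset ι)) := by
        rw [← hEq]; simp
      simpa using this
    · rintro (rfl | rfl)
      · exact ⟨⟨hsub, h0, hS⟩, rfl⟩
      · obtain ⟨h1, h2, h3⟩ := sdiff_mem_s1 hsub h0 hS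
        refine ⟨⟨h1, h2, h3⟩, ?_⟩
        rw [Finset.sdiff_sdiff_eq_self hsub, Finset.pair_comm]
  rw [hfib, Finset.card_pair (ne_sdiff_self hsub h0)]
  rw [nsmul_eq_mul]
  norm_num

lemma pi2_insert {i : ι} {S : Finset ι} (hi : i ∉ S) :
    Pi2 (insert i S)
      = (S.powerset.filter (fun R => R ≠ ∅)).image (fun R => {R, insert i (S \ R)}) := by
  classical
  ext π
  simp only [Pi2, Finset.mem_image, Finset.mem_filter, Finset.mem_powerset]
  constructor
  · rintro ⟨R, ⟨hsub, h0, hS⟩, rfl⟩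
    by_cases hiR : i ∈ R
    · refine ⟨S \ R, ⟨sdiff_subset, ?_⟩, ?_⟩
      · simp only [ne_eq, Finset.sdiff_eq_empty_iff_subset]
        intro h
        apply hS
        apply subset_antisymm hsub
        intro x hx
        rcases Finset.mem_insert.mp hx with rfl | hx
        · exact hiR
        · exact h hx
      · rw [Finset.insert_sdiff_of_mem _ hiR, sdiff_sdiff_right_self]
        have hR : insert i (S ∩ R) = R := by
          ext x
          simp only [Finset.mem_insert, Finset.mem_inter]
          constructor
          · rintro (rfl | ⟨-, hx⟩) <;> [exact hiR; exact hx]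
          · intro hx
            rcases Finset.mem_insert.mp (hsub hx) with rfl | hxS
            · exact Or.inl rfl
            · exact Or.inr ⟨hxS, hx⟩
        rw [show (S ⊓ R : Finset ι) = S ∩ R from rfl, hR, Finset.pair_comm]
    · have hsubS : R ⊆ S := by
        intro x hx
        rcases Finset.mem_insert.mp (hsub hx) with rfl | h
        · exact absurd hx hiR
        · exact h
      refine ⟨R, ⟨hsubS, h0⟩, ?_⟩
      rw [Finset.insert_sdiff_of_notMem _ hiR]
  · rintro ⟨R, ⟨hsub, h0⟩, rfl⟩
    have hiR : i ∉ R := fun h => hi (hsub h)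
    refine ⟨R, ⟨?_, h0, ?_⟩, ?_⟩
    · exact hsub.trans (Finset.subset_insert i S)
    · intro h; exact hiR (h ▸ Finset.mem_insert_self i S)
    · rw [Finset.insert_sdiff_of_notMem _ hiR]

lemma sum_pi2_insert {i : ι} {S : Finset ι} (hi : i ∉ S) (F : Finset (Finset ι) → ℝ) :
    ∑ π ∈ Pi2 (insert i S), F π
      = ∑ R ∈ S.powerset.filter (fun R => R ≠ ∅), F {R, insert i (S \ R)} := by
  rw [pi2_insert hi]
  apply Finset.sum_image
  intro R hR R' hR' hEq
  simp only [Finset.mem_coe, Finset.mem_filter, Finset.mem_powerset] at hR hR'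
  have : R ∈ ({R', insert i (S \ R')} : Finset (Finset ι)) := by
    have hEq' : ({R, insert i (S \ R)} : Finset (Finset ι)) = {R', insert i (S \ R')} := hEq
    rw [← hEq']; simp
  rcases Finset.mem_insert.mp this with rfl | h
  · rfl
  · rw [Finset.mem_singleton] at h
    exfalso
    have : i ∈ R := h ▸ Finset.mem_insert_self i (S \ R')
    exact hi (hR.1 this)

lemma keylemma {i : ι} {S : Finset ι} {p' pS : Finset (Finset ι) → ℝ} {Kp : ℝ}
    (hKp : ∀ S₁ S₂ : Finset ι, S₁ ≠ ∅ → S₂ ≠ ∅ → Disjoint S₁ S₂ → S₁ ∪ S₂ = S →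
      p' {insert i S₁, S₂} + p' {S₁, insert i S₂} = Kp * pS {S₁, S₂})
    (g : Finset ι → ℝ) (hg : ∀ R ⊆ S, g (S \ R) = g R) :
    2 * ∑ R ∈ S.powerset.filter (fun R => R ≠ ∅ ∧ R ≠ S), p' {R, insert i (S \ R)} * g R
      = Kp * ∑ R ∈ S.powerset.filter (fun R => R ≠ ∅ ∧ R ≠ S), pS {R, S \ R} * g R := by
  classical
  have reindex : ∑ R ∈ S.powerset.filter (fun R => R ≠ ∅ ∧ R ≠ S),
        p' {R, insert i (S \ R)} * g R
      = ∑ R ∈ S.powerset.filter (fun R => R ≠ ∅ ∧ R ≠ S),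
        p' {insert i R, S \ R} * g R := by
    refine Finset.sum_nbij' (fun R => S \ R) (fun R => S \ R) ?_ ?_ ?_ ?_ ?_
    · intro R hR
      simp only [Finset.mem_filter, Finset.mem_powerset] at hR ⊢
      exact ⟨(sdiff_mem_s1 hR.1 hR.2.1 hR.2.2).1, (sdiff_mem_s1 hR.1 hR.2.1 hR.2.2).2⟩
    · intro R hR
      simp only [Finset.mem_filter, Finset.mem_powerset] at hR ⊢
      exact ⟨(sdiff_mem_s1 hR.1 hR.2.1 hR.2.2).1, (sdiff_mem_s1 hR.1 hR.2.1 hR.2.2).2⟩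
    · intro R hR
      simp only [Finset.mem_filter, Finset.mem_powerset] at hR
      exact Finset.sdiff_sdiff_eq_self hR.1
    · intro R hR
      simp only [Finset.mem_filter, Finset.mem_powerset] at hR
      exact Finset.sdiff_sdiff_eq_self hR.1
    · intro R hR
      simp only [Finset.mem_filter, Finset.mem_powerset] at hR
      rw [Finset.sdiff_sdiff_eq_self hR.1, hg R hR.1, Finset.pair_comm]
  rw [two_mul]
  nth_rewrite 1 [reindex]
  rw [← Finset.sum_add_distrib, Finset.mul_sum]
  apply Finset.sum_congr rfl
  intro R hR
  simp only [Finset.mem_filter, Finset.mem_powerset] at hR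
  have h2 := (sdiff_mem_s1 hR.1 hR.2.1 hR.2.2).2.1
  have := hKp R (S \ R) hR.2.1 h2 disjoint_sdiff (Finset.union_sdiff_of_subset hR.1)
  calc p' {insert i R, S \ R} * g R + p' {R, insert i (S \ R)} * g R
      = (p' {insert i R, S \ R} + p' {R, insert i (S \ R)}) * g R := by ring
    _ = Kp * (pS {R, S \ R} * g R) := by rw [this]; ring

lemma s0_eq_insert {S : Finset ι} (hS : S ≠ ∅) :
    S.powerset.filter (fun R => R ≠ ∅)
      = insert S (S.powerset.filter (fun R => R ≠ ∅ ∧ R ≠ S)) := by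
  ext R
  simp only [Finset.mem_filter, Finset.mem_powerset, Finset.mem_insert]
  constructor
  · rintro ⟨h1, h2⟩
    by_cases h : R = S
    · exact Or.inl h
    · exact Or.inr ⟨h1, h2, h⟩
  · rintro (rfl | ⟨h1, h2, h3⟩)
    · exact ⟨Finset.Subset.refl _, hS⟩
    · exact ⟨h1, h2⟩

lemma mem_pi2_subset {S : Finset ι} {π : Finset (Finset ι)} (hπ : π ∈ Pi2 S)
    {B : Finset ι} (hB : B ∈ π) : B ⊆ S := by
  simp only [Pi2, Finset.mem_image, Finset.mem_filter, Finset.mem_powerset] at hπ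
  obtain ⟨R, ⟨hR, -⟩, rfl⟩ := hπ
  rcases Finset.mem_insert.mp hB with rfl | hB
  · exact hR
  · rw [Finset.mem_singleton] at hB
    exact hB ▸ sdiff_subset

end CoopAux

open CoopAux

theorem coop_null_player_contraction {ι : Type*} [DecidableEq ι]
    (N : Finset ι) (v : Finset ι → ℝ) (hv0 : v ∅ = 0)
    (i : ι) (hi : i ∈ N) (hnull : ∀ T ⊆ N \ {i}, v (T ∪ {i}) = v T)
    (S : Finset ι) (hS : S ⊆ N \ {i}) (h2 : 2 ≤ S.card)
    (p : Finset ι → Finset (Finset ι) → ℝ) (q : Finset ι → Finset ι → ℝ)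
    (hpS1 : ∑ π ∈ Pi2 S, p S π = 1) (hpS0 : ∀ π ∈ Pi2 S, 0 ≤ p S π)
    (hpSi1 : ∑ π ∈ Pi2 (insert i S), p (insert i S) π = 1)
    (hpSi0 : ∀ π ∈ Pi2 (insert i S), 0 ≤ p (insert i S) π)
    (Kp Kq : ℝ)
    (hKp : ∀ S₁ S₂ : Finset ι, S₁ ≠ ∅ → S₂ ≠ ∅ → Disjoint S₁ S₂ → S₁ ∪ S₂ = S →
      p (insert i S) {insert i S₁, S₂} + p (insert i S) {S₁, insert i S₂}
        = Kp * p S {S₁, S₂})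
    (hKq : ∀ T ⊆ N \ insert i S, q (insert i S) T = Kq * (q S T + q S (insert i T))) :
    coopF v p q N (insert i S) = Kp * Kq * coopF v p q N S := by
  classical
  have hiS : i ∉ S := fun h => (Finset.mem_sdiff.mp (hS h)).2 (Finset.mem_singleton_self i)
  have hSne : S ≠ ∅ := by
    intro h; rw [h] at h2; simp at h2
  have hSN : S ⊆ N := hS.trans sdiff_subset
  -- null player in "insert" form
  have hnull' : ∀ A : Finset ι, A ⊆ N \ {i} → v (insert i A) = v A := by
    intro A hA
    rw [Finset.insert_eq, Finset.union_comm]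
    exact hnull A hA
  have hsubNi : N \ insert i S ⊆ N \ {i} :=
    Finset.sdiff_subset_sdiff (Finset.Subset.refl N)
      (Finset.singleton_subset_iff.mpr (Finset.mem_insert_self i S))
  -- auxiliary: the constant identity p'({S,{i}}) + Kp = 1
  have hKp1 : p (insert i S) {S, {i}} + Kp = 1 := by
    rw [sum_pi2_insert hiS, s0_eq_insert hSne, Finset.sum_insert (by simp)] at hpSi1
    have hone : (2 : ℝ) * ∑ R ∈ S.powerset.filter (fun R => R ≠ ∅ ∧ R ≠ S),
          p (insert i S) {R, insert i (S \ R)} * (fun _ : Finset ι => (1:ℝ)) R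
        = Kp * ∑ R ∈ S.powerset.filter (fun R => R ≠ ∅ ∧ R ≠ S),
          p S {R, S \ R} * (fun _ : Finset ι => (1:ℝ)) R :=
      keylemma hKp (fun _ => (1:ℝ)) (fun _ _ => rfl)
    simp only [mul_one] at hone
    have hh := helper1 S (p S)
    rw [hpS1, mul_one] at hh
    rw [hh] at hone
    have hsum : ∑ R ∈ S.powerset.filter (fun R => R ≠ ∅ ∧ R ≠ S),
        p (insert i S) {R, insert i (S \ R)} = Kp := by linarith
    rw [hsum] at hpSi1
    rw [show (insert i (S \ S) : Finset ι) = {i} by rw [Finset.sdiff_self]; rfl] at hpSi1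
    linarith
  -- attitude contraction
  have hatt : ∀ T ⊆ N \ insert i S,
      attitude v (p (insert i S)) (insert i S) T = Kp * attitude v (p S) S T := by
    intro T hT
    have hTi : T ⊆ N \ {i} := hT.trans hsubNi
    have hiT : i ∉ T := fun h => (Finset.mem_sdiff.mp (hTi h)).2 (Finset.mem_singleton_self i)
    have hBT : ∀ B : Finset ι, B ⊆ S → B ∪ T ⊆ N \ {i} :=
      fun B hB => Finset.union_subset (hB.trans hS) hTi
    -- the pairwise function
    set g : Finset ι → ℝ := fun R => (v (R ∪ T) + v ((S \ R) ∪ T)) - 2 * v T with hg_def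
    have hg : ∀ R ⊆ S, g (S \ R) = g R := by
      intro R hR
      simp only [hg_def]
      rw [Finset.sdiff_sdiff_eq_self hR]
      ring
    -- main sum identity
    have e1 : ∑ π ∈ Pi2 (insert i S), p (insert i S) π * ((∑ B ∈ π, v (B ∪ T)) - 2 * v T)
        = p (insert i S) {S, {i}} * (v (S ∪ T) - v T)
          + Kp * ∑ π ∈ Pi2 S, p S π * ((∑ B ∈ π, v (B ∪ T)) - 2 * v T) := by
      rw [sum_pi2_insert hiS, s0_eq_insert hSne, Finset.sum_insert (by simp)]
      have hSterm : p (insert i S) {S, insert i (S \ S)}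
            * ((∑ B ∈ ({S, insert i (S \ S)} : Finset (Finset ι)), v (B ∪ T)) - 2 * v T)
          = p (insert i S) {S, {i}} * (v (S ∪ T) - v T) := by
        rw [show (insert i (S \ S) : Finset ι) = {i} by rw [Finset.sdiff_self]; rfl]
        have hne : S ≠ ({i} : Finset ι) := by
          intro h; exact hiS (h ▸ Finset.mem_singleton_self i)
        rw [Finset.sum_pair hne]
        rw [(Finset.insert_eq i T).symm, hnull' T hTi]
        ring
      rw [hSterm]
      congr 1
      -- remaining sum equals Kp * Σ_π
      have hterm : ∀ R ∈ S.powerset.filter (fun R => R ≠ ∅ ∧ R ≠ S),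
          p (insert i S) {R, insert i (S \ R)}
            * ((∑ B ∈ ({R, insert i (S \ R)} : Finset (Finset ι)), v (B ∪ T)) - 2 * v T)
          = p (insert i S) {R, insert i (S \ R)} * g R := by
        intro R hR
        simp only [Finset.mem_filter, Finset.mem_powerset] at hR
        have hiR : i ∉ R := fun h => hiS (hR.1 h)
        have hne : R ≠ insert i (S \ R) := by
          intro h; exact hiR (h ▸ Finset.mem_insert_self i (S \ R))
        rw [Finset.sum_pair hne, Finset.insert_union,
          hnull' ((S \ R) ∪ T) (hBT _ sdiff_subset)]
      rw [Finset.sum_congr rfl hterm]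
      have hk := keylemma hKp g hg
      have hpt : ∀ R ∈ S.powerset.filter (fun R => R ≠ ∅ ∧ R ≠ S),
          p S {R, S \ R} * g R
          = (fun π => p S π * ((∑ B ∈ π, v (B ∪ T)) - 2 * v T)) ({R, S \ R} : Finset (Finset ι)) := by
        intro R hR
        simp only [Finset.mem_filter, Finset.mem_powerset] at hR
        show p S {R, S \ R} * g R
          = p S {R, S \ R} * ((∑ B ∈ ({R, S \ R} : Finset (Finset ι)), v (B ∪ T)) - 2 * v T)
        rw [Finset.sum_pair (ne_sdiff_self hR.1 hR.2.1), hg_def]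
      rw [Finset.sum_congr rfl hpt] at hk
      rw [helper1 S (fun π => p S π * ((∑ B ∈ π, v (B ∪ T)) - 2 * v T))] at hk
      linarith
    -- finish
    have hvins : v (insert i S ∪ T) = v (S ∪ T) := by
      rw [Finset.insert_union, hnull' (S ∪ T) (hBT S (Finset.Subset.refl S))]
    unfold attitude
    rw [hvins, e1]
    linear_combination (-(v (S ∪ T) - v T)) * hKp1
  -- attitude invariance under inserting i into T
  have hattT : ∀ T ⊆ N \ insert i S,
      attitude v (p S) S (insert i T) = attitude v (p S) S T := by
    intro T hT
    have hTi : T ⊆ N \ {i} := hT.trans hsubNi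
    unfold attitude
    rw [Finset.union_insert, hnull' (S ∪ T) (Finset.union_subset hS hTi), hnull' T hTi]
    congr 1
    apply Finset.sum_congr rfl
    intro π hπ
    congr 2
    apply Finset.sum_congr rfl
    intro B hB
    rw [Finset.union_insert,
      hnull' (B ∪ T) (Finset.union_subset ((mem_pi2_subset hπ hB).trans hS) hTi)]
  -- assemble the outer sums
  have hNS : N \ S = insert i (N \ insert i S) := by
    ext x
    simp only [Finset.mem_sdiff, Finset.mem_insert]
    constructor
    · rintro ⟨hxN, hxS⟩
      by_cases h : x = i
      · exact Or.inl h
      · exact Or.inr ⟨hxN, fun hx => hx.elim h hxS⟩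
    · rintro (rfl | ⟨hxN, hx⟩)
      · exact ⟨hi, hiS⟩
      · exact ⟨hxN, fun h => hx (Or.inr h)⟩
  have hiP : i ∉ N \ insert i S := fun h =>
    (Finset.mem_sdiff.mp h).2 (Finset.mem_insert_self i S)
  have hdisj : Disjoint ((N \ insert i S).powerset)
      (((N \ insert i S).powerset).image (insert i)) := by
    rw [Finset.disjoint_left]
    intro T hT hT'
    obtain ⟨T', hT', rfl⟩ := Finset.mem_image.mp hT'
    have : i ∈ N \ insert i S := (Finset.mem_powerset.mp hT) (Finset.mem_insert_self i T')
    exact hiP this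
  have hinj : ∀ T ∈ (N \ insert i S).powerset, ∀ T' ∈ (N \ insert i S).powerset,
      insert i T = insert i T' → T = T' := by
    intro T hT T' hT' hEq
    have h1 : i ∉ T := fun h => hiP (Finset.mem_powerset.mp hT h)
    have h2 : i ∉ T' := fun h => hiP (Finset.mem_powerset.mp hT' h)
    rw [← Finset.erase_insert h1, ← Finset.erase_insert h2, hEq]
  rw [coopF, coopF, hNS, Finset.powerset_insert, Finset.sum_union hdisj,
    Finset.sum_image hinj]
  have step1 : ∑ T ∈ (N \ insert i S).powerset,
        q (insert i S) T * attitude v (p (insert i S)) (insert i S) T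
      = ∑ T ∈ (N \ insert i S).powerset,
        (Kq * (q S T + q S (insert i T))) * (Kp * attitude v (p S) S T) := by
    apply Finset.sum_congr rfl
    intro T hT
    rw [hKq T (Finset.mem_powerset.mp hT), hatt T (Finset.mem_powerset.mp hT)]
  have step2 : ∑ T ∈ (N \ insert i S).powerset,
        q S (insert i T) * attitude v (p S) S (insert i T)
      = ∑ T ∈ (N \ insert i S).powerset,
        q S (insert i T) * attitude v (p S) S T := by
    apply Finset.sum_congr rfl
    intro T hT
    rw [hattT T (Finset.mem_powerset.mp hT)]
  rw [step1, step2, mul_add, Finset.mul_sum, Finset.mul_sum, ← Finset.sum_add_distrib]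
  apply Finset.sum_congr rfl
  intro T hT
  ring
end

section
/- Let u_C be the unanimity game on N for a nonempty coalition C (u_C(S) = 1 if S ⊇ C, else 0). For S ⊆ C nonempty with |S| = s and |C| = c, the Shapley–Owen coopetition index satisfies C^{u_C}_{p^r,q^r}(S) = 1/(c - s + 1). -/
open Finset

/-- The permutation-induced external weight of `T ⊆ N \ S`:
`q^r_S(T) = t! (n-s-t)! / (n-s+1)!`. -/
noncomputable def qperm {ι : Type*} [DecidableEq ι] (N S T : Finset ι) : ℝ :=
  (Nat.factorial T.card : ℝ) * (Nat.factorial (N.card - S.card - T.card) : ℝ)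
    / (Nat.factorial (N.card - S.card + 1) : ℝ)

/-- The unanimity game for coalition `C`. -/
def unanimity {ι : Type*} [DecidableEq ι] (C A : Finset ι) : ℝ :=
  if C ⊆ A then 1 else 0

/-- The permutation-based internal weight of a 2-partition `π = {R, S \ R}` of `S`. -/
noncomputable def pperm {ι : Type*} [DecidableEq ι] (S : Finset ι)
    (π : Finset (Finset ι)) : ℝ :=
  2 * (∏ B ∈ π, (Nat.factorial B.card : ℝ)) /
    (((S.card : ℝ) - 1) * (Nat.factorial S.card : ℝ))

/-- Key combinatorial identity. -/
lemma sum_fact_key {ι : Type*} [DecidableEq ι] (D : Finset ι) :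
    ∀ E : Finset ι, Disjoint D E →
      ∑ T ∈ (D ∪ E).powerset,
        (if D ⊆ T then
          ((Nat.factorial T.card : ℝ) * (Nat.factorial ((D ∪ E).card - T.card) : ℝ)
            / (Nat.factorial ((D ∪ E).card + 1) : ℝ)) else 0)
        = 1 / ((D.card : ℝ) + 1) := by
  intro E
  induction E using Finset.induction_on with
  | empty =>
    intro _
    rw [Finset.union_empty]
    rw [Finset.sum_eq_single_of_mem D (Finset.mem_powerset.mpr subset_rfl)]
    · simp only [subset_refl, if_true, Nat.sub_self, Nat.factorial_zero, Nat.cast_one, mul_one]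
      have hf : ((Nat.factorial D.card : ℝ)) ≠ 0 :=
        Nat.cast_ne_zero.mpr (Nat.factorial_ne_zero _)
      rw [Nat.factorial_succ]
      push_cast
      rw [mul_comm ((D.card : ℝ) + 1), div_mul_eq_div_div, div_self hf]
    · intro T hT hne
      rw [if_neg]
      intro hDT
      exact hne (Finset.Subset.antisymm (Finset.mem_powerset.mp hT) hDT)
  | @insert a E ha ih =>
    intro hdisj
    have haD : a ∉ D := fun h => (Finset.disjoint_left.mp hdisj h (Finset.mem_insert_self a E))
    have hDE : Disjoint D E := hdisj.mono_right (Finset.subset_insert a E)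
    have haDE : a ∉ D ∪ E := by simp [haD, ha]
    have hunion : D ∪ insert a E = insert a (D ∪ E) := Finset.union_insert a D E
    rw [hunion]
    rw [Finset.sum_powerset_insert haDE]
    set m := (D ∪ E).card with hm
    have hcardi : (insert a (D ∪ E)).card = m + 1 := Finset.card_insert_of_notMem haDE
    rw [← ih hDE, ← Finset.sum_add_distrib]
    apply Finset.sum_congr rfl
    intro T hT
    have hTsub := Finset.mem_powerset.mp hT
    have haT : a ∉ T := fun h => haDE (hTsub h)
    have htle : T.card ≤ m := Finset.card_le_card hTsub
    have hcardT : (insert a T).card = T.card + 1 := Finset.card_insert_of_notMem haT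
    have hDins : D ⊆ insert a T ↔ D ⊆ T := by
      constructor
      · intro h x hx
        rcases Finset.mem_insert.mp (h hx) with h1 | h1
        · exact absurd (h1 ▸ hx) haD
        · exact h1
      · intro h; exact h.trans (Finset.subset_insert a T)
    by_cases hDT : D ⊆ T
    · rw [if_pos hDT, if_pos hDT, if_pos (hDins.mpr hDT), hcardi, hcardT]
      set t := T.card
      -- arithmetic identity
      have h1 : m + 1 - t = (m - t) + 1 := by omega
      have h2 : m + 1 - (t + 1) = m - t := by omega
      rw [h1, h2]
      have hnat : Nat.factorial t * Nat.factorial ((m - t) + 1)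
          + Nat.factorial (t + 1) * Nat.factorial (m - t)
          = (m + 2) * (Nat.factorial t * Nat.factorial (m - t)) := by
        have h3 : (m - t) + 1 + (t + 1) = m + 2 := by omega
        rw [Nat.factorial_succ, Nat.factorial_succ, ← h3]
        ring
      have hfm : (Nat.factorial (m + 1 + 1) : ℝ) = (m + 2) * Nat.factorial (m + 1) := by
        rw [show m + 1 + 1 = (m+1) + 1 from rfl, Nat.factorial_succ]
        push_cast; ring
      rw [← add_div, hfm]
      rw [show (Nat.factorial t : ℝ) * Nat.factorial ((m-t)+1) + Nat.factorial (t+1) * Nat.factorial (m-t)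
            = ((m : ℝ) + 2) * (Nat.factorial t * Nat.factorial (m-t)) by
        exact_mod_cast congrArg (Nat.cast (R := ℝ)) hnat]
      rw [mul_div_mul_left]
      positivity
    · rw [if_neg hDT, if_neg hDT, if_neg (fun h => hDT (hDins.mp h))]
      ring

lemma attitude_unanimity {ι : Type*} [DecidableEq ι] (C S T : Finset ι) (p : Finset (Finset ι) → ℝ)
    (hS : S ⊆ C) (hSne : S ≠ ∅) (hdisj : Disjoint S T) :
    attitude (unanimity C) p S T = if C \ S ⊆ T then 1 else 0 := by
  obtain ⟨a, haS⟩ := Finset.nonempty_iff_ne_empty.mpr hSne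
  have hvT : unanimity C T = 0 := by
    rw [unanimity, if_neg]
    intro h
    exact Finset.disjoint_left.mp hdisj haS (h (hS haS))
  have hparts : ∀ π ∈ Pi2 S, ∀ B ∈ π, unanimity C (B ∪ T) = 0 := by
    intro π hπ B hB
    simp only [Pi2, Finset.mem_image, Finset.mem_filter, Finset.mem_powerset] at hπ
    obtain ⟨R, ⟨hRS, hRne, hRneS⟩, hπeq⟩ := hπ
    subst hπeq
    have hBS : B ⊆ S ∧ B ≠ S := by
      rcases Finset.mem_insert.mp hB with h | h
      · exact ⟨h ▸ hRS, h ▸ hRneS⟩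
      · rw [Finset.mem_singleton] at h
        subst h
        refine ⟨Finset.sdiff_subset, ?_⟩
        intro h
        obtain ⟨r, hr⟩ := Finset.nonempty_iff_ne_empty.mpr hRne
        have : r ∈ S \ R := by rw [h]; exact hRS hr
        exact (Finset.mem_sdiff.mp this).2 hr
    obtain ⟨b, hbS, hbB⟩ := Finset.exists_of_ssubset (lt_of_le_of_ne hBS.1 hBS.2)
    rw [unanimity, if_neg]
    intro h
    have := h (hS hbS)
    rcases Finset.mem_union.mp this with h1 | h1
    · exact hbB h1
    · exact Finset.disjoint_left.mp hdisj hbS h1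
  have hsum0 : ∀ π ∈ Pi2 S, p π * ((∑ B ∈ π, unanimity C (B ∪ T)) - 2 * unanimity C T) = 0 := by
    intro π hπ
    rw [Finset.sum_eq_zero (hparts π hπ), hvT]
    ring
  rw [attitude, Finset.sum_eq_zero hsum0, hvT, unanimity]
  have : C ⊆ S ∪ T ↔ C \ S ⊆ T := by
    constructor
    · intro h x hx
      rcases Finset.mem_union.mp (h (Finset.mem_sdiff.mp hx).1) with h1 | h1
      · exact absurd h1 (Finset.mem_sdiff.mp hx).2
      · exact h1
    · intro h x hx
      by_cases hxS : x ∈ S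
      · exact Finset.mem_union_left _ hxS
      · exact Finset.mem_union_right _ (h (Finset.mem_sdiff.mpr ⟨hx, hxS⟩))
  by_cases h : C \ S ⊆ T
  · rw [if_pos h, if_pos (this.mpr h)]; ring
  · rw [if_neg h, if_neg (fun hh => h (this.mp hh))]; ring

theorem shapley_owen_coop_unanimity_subset {ι : Type*} [DecidableEq ι]
    (N C S : Finset ι) (hCN : C ⊆ N) (hC : C ≠ ∅) (hS : S ⊆ C) (hSne : S ≠ ∅) :
    coop (unanimity C) (pperm S) (qperm N S) N S
      = 1 / ((C.card : ℝ) - (S.card : ℝ) + 1) := by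
  have hSN : S ⊆ N := hS.trans hCN
  have hcardNS : (N \ S).card = N.card - S.card := Finset.card_sdiff_of_subset hSN
  have hDsub : C \ S ⊆ N \ S := Finset.sdiff_subset_sdiff hCN subset_rfl
  have hunion : (C \ S) ∪ ((N \ S) \ (C \ S)) = N \ S := Finset.union_sdiff_of_subset hDsub
  have hdisjDE : Disjoint (C \ S) ((N \ S) \ (C \ S)) := Finset.disjoint_sdiff
  have key := sum_fact_key (C \ S) ((N \ S) \ (C \ S)) hdisjDE
  rw [hunion] at key
  rw [coop]
  rw [show ∑ T ∈ (N \ S).powerset, qperm N S T * attitude (unanimity C) (pperm S) S T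
      = ∑ T ∈ (N \ S).powerset,
        (if C \ S ⊆ T then
          ((Nat.factorial T.card : ℝ) * (Nat.factorial ((N \ S).card - T.card) : ℝ)
            / (Nat.factorial ((N \ S).card + 1) : ℝ)) else 0) from ?_, key]
  · congr 1
    have h1 : (C \ S).card = C.card - S.card := Finset.card_sdiff_of_subset hS
    rw [h1, Nat.cast_sub (Finset.card_le_card hS)]
  · apply Finset.sum_congr rfl
    intro T hT
    have hTsub := Finset.mem_powerset.mp hT
    have hdisjST : Disjoint S T := by
      apply Finset.disjoint_left.mpr
      intro x hxS hxT
      exact (Finset.mem_sdiff.mp (hTsub hxT)).2 hxS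
    rw [attitude_unanimity C S T (pperm S) hS hSne hdisjST, qperm, hcardNS]
    by_cases h : C \ S ⊆ T
    · rw [if_pos h, if_pos h]; ring
    · rw [if_neg h, if_neg h]; ring
end

section
/- Let u_C be the unanimity game on N for ∅ ≠ C ⊊ N, and let S ⊆ N satisfy S ∩ C ≠ ∅, S ∩ (N∖C) ≠ ∅, with |S| = s, |S ∩ C| = r, |C| = c. With the uniform internal family p^u, the probability that a uniformly random unordered 2-partition {S₁,S₂} of S has both S₁ ∩ C and S₂ ∩ C nonempty proper subsets of S ∩ C is (2^{s-1} - 2^{s-r})/(2^{s-1} - 1); consequently, the Uniform Shapley coopetition index satisfies C^{u_C}_{p^u,q^r}(S) = (2^{s-1} - 2^{s-r})/((2^{s-1} - 1)(c - r + 1)). -/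
open Finset

/-- The uniform internal distribution on the 2-partitions of `S`. -/
noncomputable def punif {ι : Type*} [DecidableEq ι] (S : Finset ι)
    (_π : Finset (Finset ι)) : ℝ :=
  1 / ((2 : ℝ) ^ (S.card - 1) - 1)

section Aux

lemma qsum_aux (p k : ℕ) :
    ∑ j ∈ Finset.range (p + 1), p.choose j * ((j + k).factorial * (p - j).factorial)
      = p.factorial * k.factorial * (p + k + 1).choose (k + 1) := by
  have step : ∀ j ∈ Finset.range (p + 1),
      p.choose j * ((j + k).factorial * (p - j).factorial)
        = (j + k).choose k * (k.factorial * p.factorial) := by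
    intro j hj
    have hj' : j ≤ p := Nat.lt_succ_iff.mp (Finset.mem_range.mp hj)
    have h1 : (j + k).choose k * k.factorial * j.factorial = (j + k).factorial := by
      simpa using Nat.choose_mul_factorial_mul_factorial (Nat.le_add_left k j)
    have h2 : p.choose j * j.factorial * (p - j).factorial = p.factorial :=
      Nat.choose_mul_factorial_mul_factorial hj'
    rw [← h1, ← h2]; ring
  rw [Finset.sum_congr rfl step, ← Finset.sum_mul, Nat.sum_range_add_choose]
  ring

lemma qsum {ι : Type*} [DecidableEq ι] (M D : Finset ι) (h : D ⊆ M) :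
    ∑ T ∈ M.powerset.filter (fun T => D ⊆ T),
      ((T.card.factorial : ℝ) * ((M.card - T.card).factorial : ℝ)
        / ((M.card + 1).factorial : ℝ)) = 1 / (D.card + 1) := by
  have hkm : D.card ≤ M.card := card_le_card h
  have hre : ∑ T ∈ M.powerset.filter (fun T => D ⊆ T),
      ((T.card.factorial : ℝ) * ((M.card - T.card).factorial : ℝ)
        / ((M.card + 1).factorial : ℝ))
      = ∑ A ∈ (M \ D).powerset,
        (((A.card + D.card).factorial : ℝ) * ((M.card - (A.card + D.card)).factorial : ℝ)
          / ((M.card + 1).factorial : ℝ)) := by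
    refine Finset.sum_bij' (fun T _ => T \ D) (fun A _ => A ∪ D) ?_ ?_ ?_ ?_ ?_
    · intro T hT
      rw [mem_filter, mem_powerset] at hT
      exact mem_powerset.mpr (sdiff_subset_sdiff hT.1 le_rfl)
    · intro A hA
      rw [mem_powerset] at hA
      refine mem_filter.mpr ⟨mem_powerset.mpr (union_subset (hA.trans sdiff_subset) h), subset_union_right⟩
    · intro T hT
      rw [mem_filter] at hT
      exact sdiff_union_of_subset hT.2
    · intro A hA
      rw [mem_powerset] at hA
      have hd : Disjoint A D := disjoint_of_subset_left hA sdiff_disjoint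
      rw [union_sdiff_right, sdiff_eq_self_of_disjoint hd]
    · intro T hT
      rw [mem_filter] at hT
      rw [card_sdiff_of_subset hT.2, Nat.sub_add_cancel (card_le_card hT.2)]
  rw [hre]
  rw [Finset.sum_powerset_apply_card
    (fun j => (((j + D.card).factorial : ℝ) * ((M.card - (j + D.card)).factorial : ℝ)
      / ((M.card + 1).factorial : ℝ)))]
  have hcard : (M \ D).card = M.card - D.card := card_sdiff_of_subset h
  set p := M.card - D.card with hp
  set k := D.card
  have hm : M.card = p + k := by omega
  rw [hcard]
  have hterm : ∀ j ∈ Finset.range (p + 1),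
      p.choose j • (((j + k).factorial : ℝ) * ((M.card - (j + k)).factorial : ℝ)
        / ((M.card + 1).factorial : ℝ))
      = (p.choose j * ((j + k).factorial * (p - j).factorial) : ℕ) / ((M.card + 1).factorial : ℝ) := by
    intro j hj
    have : M.card - (j + k) = p - j := by omega
    rw [this, nsmul_eq_mul]
    push_cast
    ring
  rw [Finset.sum_congr rfl hterm, ← Finset.sum_div, ← Nat.cast_sum, qsum_aux]
  have hfin : (p.factorial * k.factorial * (p + k + 1).choose (k + 1)) * (k + 1)
      = (M.card + 1).factorial := by
    have h1 : (k + 1) * k.factorial = (k + 1).factorial := rfl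
    have h2 : (p + k + 1).choose (k + 1) * (k + 1).factorial * p.factorial
        = (p + k + 1).factorial := by
      have := Nat.choose_mul_factorial_mul_factorial (n := p + k + 1) (k := k + 1) (by omega)
      simpa [show p + k + 1 - (k + 1) = p by omega] using this
    rw [hm]
    calc (p.factorial * k.factorial * (p + k + 1).choose (k + 1)) * (k + 1)
        = (p + k + 1).choose (k + 1) * ((k+1) * k.factorial) * p.factorial := by ring
      _ = (p + k + 1).factorial := by rw [h1, h2]
  rw [div_eq_div_iff (by positivity) (Nat.cast_add_one_ne_zero _), one_mul]
  exact_mod_cast hfin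

lemma sum_Pi2_eq {ι : Type*} [DecidableEq ι] {S : Finset ι} {x : ι} (hx : x ∈ S)
    (f : Finset (Finset ι) → ℝ) :
    ∑ π ∈ Pi2 S, f π
      = ∑ R ∈ S.powerset.filter (fun R => x ∈ R ∧ R ≠ S), f {R, S \ R} := by
  refine (Finset.sum_bij (fun R _ => ({R, S \ R} : Finset (Finset ι))) ?_ ?_ ?_ ?_).symm
  · intro R hR
    rw [mem_filter, mem_powerset] at hR
    exact mem_image.mpr ⟨R, mem_filter.mpr ⟨mem_powerset.mpr hR.1,
      ne_empty_of_mem hR.2.1, hR.2.2⟩, rfl⟩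
  · intro R hR R' hR' hEq
    rw [mem_filter] at hR hR'
    have : R ∈ ({R', S \ R'} : Finset (Finset ι)) := by rw [← hEq]; exact mem_insert_self _ _
    rcases mem_insert.mp this with h' | h'
    · exact h'
    · rw [mem_singleton] at h'
      exact absurd (mem_sdiff.mp (h' ▸ hR.2.1)).2 (not_not_intro hR'.2.1)
  · intro π hπ
    obtain ⟨R, hR, hπR⟩ := mem_image.mp hπ
    rw [mem_filter, mem_powerset] at hR
    by_cases hxR : x ∈ R
    · exact ⟨R, mem_filter.mpr ⟨mem_powerset.mpr hR.1, hxR, hR.2.2⟩, hπR⟩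
    · refine ⟨S \ R, mem_filter.mpr ⟨mem_powerset.mpr sdiff_subset,
        mem_sdiff.mpr ⟨hx, hxR⟩, ?_⟩, ?_⟩
      · intro hcon
        have hd : Disjoint S R := Finset.sdiff_eq_self_iff_disjoint.mp hcon
        exact hR.2.1 (eq_empty_iff_forall_notMem.mpr
          fun y hy => disjoint_right.mp hd hy (hR.1 hy))
      · show ({S \ R, S \ (S \ R)} : Finset (Finset ι)) = π
        rw [Finset.sdiff_sdiff_eq_self hR.1, pair_comm, hπR]
  · intro R _; rfl

lemma card_filter_mem_ne {ι : Type*} [DecidableEq ι] {S : Finset ι} {x : ι} (hx : x ∈ S) :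
    (S.powerset.filter (fun R => x ∈ R ∧ R ≠ S)).card = 2 ^ (S.card - 1) - 1 := by
  have hb : (S.powerset.filter (fun R => x ∈ R ∧ R ≠ S)).card
      = (((S.erase x).powerset).filter (fun B => B ≠ S.erase x)).card := by
    refine Finset.card_bij' (fun R _ => R.erase x) (fun B _ => insert x B) ?_ ?_ ?_ ?_
    · intro R hR
      rw [mem_filter, mem_powerset] at hR ⊢
      constructor
      · exact fun y hy => mem_erase.mpr ⟨(mem_erase.mp hy).1, hR.1 (mem_erase.mp hy).2⟩
      · intro hcon
        have hcon' : R.erase x = S.erase x := hcon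
        apply hR.2.2
        rw [← insert_erase hR.2.1, hcon', insert_erase hx]
    · intro B hB
      rw [mem_filter, mem_powerset] at hB ⊢
      refine ⟨insert_subset hx (hB.1.trans (erase_subset _ _)), mem_insert_self _ _, ?_⟩
      intro hcon
      have hcon' : insert x B = S := hcon
      apply hB.2
      have hxB : x ∉ B := fun hxB => (mem_erase.mp (hB.1 hxB)).1 rfl
      rw [← hcon', erase_insert hxB]
    · intro R hR
      rw [mem_filter] at hR
      exact insert_erase hR.2.1
    · intro B hB
      rw [mem_filter, mem_powerset] at hB
      exact erase_insert (fun hxB => (mem_erase.mp (hB.1 hxB)).1 rfl)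
  rw [hb, filter_ne', card_erase_of_mem (mem_powerset_self _), card_powerset,
    card_erase_of_mem hx]

lemma card_bad {ι : Type*} [DecidableEq ι] {S C : Finset ι} {x : ι} (hxS : x ∈ S) (hxC : x ∈ C) :
    ((S.powerset.filter (fun R => x ∈ R ∧ R ≠ S)).filter (fun R => S ∩ C ⊆ R)).card
      = 2 ^ (S.card - (S ∩ C).card) - 1 := by
  have hb : ((S.powerset.filter (fun R => x ∈ R ∧ R ≠ S)).filter (fun R => S ∩ C ⊆ R)).card
      = (((S \ C).powerset).filter (fun B => B ≠ S \ C)).card := by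
    refine Finset.card_bij' (fun R _ => R \ C) (fun B _ => B ∪ (S ∩ C)) ?_ ?_ ?_ ?_
    · intro R hR
      rw [mem_filter, mem_filter, mem_powerset] at hR
      rw [mem_filter, mem_powerset]
      refine ⟨sdiff_subset_sdiff hR.1.1 le_rfl, ?_⟩
      intro hcon
      have hcon' : R \ C = S \ C := hcon
      apply hR.1.2.2
      refine Subset.antisymm hR.1.1 (fun y hy => ?_)
      by_cases hyC : y ∈ C
      · exact hR.2 (mem_inter.mpr ⟨hy, hyC⟩)
      · have : y ∈ R \ C := hcon' ▸ (mem_sdiff.mpr ⟨hy, hyC⟩)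
        exact (mem_sdiff.mp this).1
    · intro B hB
      rw [mem_filter, mem_powerset] at hB
      rw [mem_filter, mem_filter, mem_powerset]
      refine ⟨⟨union_subset (hB.1.trans sdiff_subset) inter_subset_left,
        mem_union_right _ (mem_inter.mpr ⟨hxS, hxC⟩), ?_⟩, subset_union_right⟩
      intro hcon
      have hcon' : B ∪ S ∩ C = S := hcon
      apply hB.2
      have : (B ∪ S ∩ C) \ C = S \ C := by rw [hcon']
      rw [union_sdiff_distrib, show (S ∩ C) \ C = ∅ by simp, union_empty,
        sdiff_eq_self_of_disjoint (disjoint_of_subset_left hB.1 sdiff_disjoint)] at this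
      exact this
    · intro R hR
      rw [mem_filter, mem_filter, mem_powerset] at hR
      show R \ C ∪ S ∩ C = R
      refine Subset.antisymm (union_subset sdiff_subset hR.2) (fun y hy => ?_)
      by_cases hyC : y ∈ C
      · exact mem_union_right _ (mem_inter.mpr ⟨hR.1.1 hy, hyC⟩)
      · exact mem_union_left _ (mem_sdiff.mpr ⟨hy, hyC⟩)
    · intro B hB
      rw [mem_filter, mem_powerset] at hB
      show (B ∪ S ∩ C) \ C = B
      rw [union_sdiff_distrib, show (S ∩ C) \ C = ∅ by simp, union_empty,
        sdiff_eq_self_of_disjoint (disjoint_of_subset_left hB.1 sdiff_disjoint)]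
  rw [hb, filter_ne', card_erase_of_mem (mem_powerset_self _), card_powerset]
  congr 2
  rw [← sdiff_inter_self_left, card_sdiff_of_subset inter_subset_left]

end Aux

theorem uniform_shapley_coop_unanimity_straddling {ι : Type*} [DecidableEq ι]
    (N C S : Finset ι) (s r c : ℕ)
    (hCN : C ⊆ N) (hC : C ≠ ∅) (hCprop : C ≠ N) (hS : S ⊆ N)
    (h1 : (S ∩ C).Nonempty) (h2 : (S ∩ (N \ C)).Nonempty)
    (hs : S.card = s) (hr : (S ∩ C).card = r) (hc : C.card = c) :
    (∑ π ∈ (Pi2 S).filter (fun π => ∀ B ∈ π, B ∩ C ≠ ∅ ∧ B ∩ C ≠ S ∩ C), punif S π)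
        = ((2 : ℝ) ^ (s - 1) - (2 : ℝ) ^ (s - r)) / ((2 : ℝ) ^ (s - 1) - 1)
      ∧ coop (unanimity C) (punif S) (qperm N S) N S
        = ((2 : ℝ) ^ (s - 1) - (2 : ℝ) ^ (s - r))
            / (((2 : ℝ) ^ (s - 1) - 1) * ((c : ℝ) - (r : ℝ) + 1)) := by
  subst hs hr hc
  obtain ⟨x, hxSC⟩ := h1
  have hxS : x ∈ S := (mem_inter.mp hxSC).1
  have hxC : x ∈ C := (mem_inter.mp hxSC).2
  obtain ⟨y, hySN⟩ := h2
  have hyS : y ∈ S := (mem_inter.mp hySN).1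
  have hyC : y ∉ C := (mem_sdiff.mp (mem_inter.mp hySN).2).2
  set s := S.card with hs
  set r := (S ∩ C).card with hr
  set c := C.card with hc
  have hr1 : 1 ≤ r := card_pos.mpr ⟨x, hxSC⟩
  have hrs : r < s := card_lt_card ⟨inter_subset_left, fun hcon =>
    hyC (mem_inter.mp (hcon hyS)).2⟩
  have hrc : r ≤ c := card_le_card inter_subset_right
  have hpow : (2:ℕ) ^ (s - r) ≤ 2 ^ (s - 1) := Nat.pow_le_pow_right (by norm_num) (by omega)
  have hpow2 : (2:ℕ) ≤ 2 ^ (s - 1) := by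
    calc (2:ℕ) = 2 ^ 1 := rfl
    _ ≤ 2 ^ (s - 1) := Nat.pow_le_pow_right (by norm_num) (by omega)
  set A := S.powerset.filter (fun R => x ∈ R ∧ R ≠ S) with hA
  have cardA : A.card = 2 ^ (s - 1) - 1 := card_filter_mem_ne hxS
  have cardBad : (A.filter (fun R => S ∩ C ⊆ R)).card = 2 ^ (s - r) - 1 := card_bad hxS hxC
  have cardGood : (A.filter (fun R => ¬ S ∩ C ⊆ R)).card = 2 ^ (s - 1) - 2 ^ (s - r) := by
    rw [Finset.filter_not, card_sdiff_of_subset (filter_subset _ _), cardA, cardBad,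
      Nat.sub_sub, Nat.add_sub_cancel' Nat.one_le_two_pow]
  -- real denominators
  have hdR : ((2:ℝ) ^ (s - 1) - 1) ≠ 0 := by
    have : (2:ℝ) ≤ 2 ^ (s - 1) := by exact_mod_cast hpow2
    linarith
  -- characterization of good partitions on the slice A
  have hgood_iff : ∀ R ∈ A,
      ((∀ B ∈ ({R, S \ R} : Finset (Finset ι)), B ∩ C ≠ ∅ ∧ B ∩ C ≠ S ∩ C)
        ↔ ¬ (S ∩ C ⊆ R)) := by
    intro R hR
    rw [hA, mem_filter, mem_powerset] at hR
    obtain ⟨hRS, hxR, hRneS⟩ := hR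
    constructor
    · intro hP hsub
      apply (hP R (mem_insert_self _ _)).2
      refine Subset.antisymm (fun z hz => mem_inter.mpr
        ⟨hRS (mem_inter.mp hz).1, (mem_inter.mp hz).2⟩) ?_
      exact fun z hz => mem_inter.mpr ⟨hsub hz, (mem_inter.mp hz).2⟩
    · intro hnsub B hB
      obtain ⟨z, hzSC, hzR⟩ := not_subset.mp hnsub
      rcases mem_insert.mp hB with hBR | hBR
      · subst hBR
        refine ⟨ne_empty_of_mem (mem_inter.mpr ⟨hxR, hxC⟩), fun hcon => ?_⟩
        exact hzR (mem_inter.mp (hcon ▸ hzSC)).1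
      · rw [mem_singleton] at hBR
        subst hBR
        refine ⟨ne_empty_of_mem (mem_inter.mpr
          ⟨mem_sdiff.mpr ⟨(mem_inter.mp hzSC).1, hzR⟩, (mem_inter.mp hzSC).2⟩), fun hcon => ?_⟩
        have : x ∈ (S \ R) ∩ C := hcon ▸ hxSC
        exact (mem_sdiff.mp (mem_inter.mp this).1).2 hxR
  -- Part 1
  have part1 : (∑ π ∈ (Pi2 S).filter (fun π => ∀ B ∈ π, B ∩ C ≠ ∅ ∧ B ∩ C ≠ S ∩ C), punif S π)
      = ((2 : ℝ) ^ (s - 1) - (2 : ℝ) ^ (s - r)) / ((2 : ℝ) ^ (s - 1) - 1) := by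
    rw [Finset.sum_filter, sum_Pi2_eq hxS]
    rw [Finset.sum_congr rfl (fun R hR => if_congr (hgood_iff R hR) rfl rfl)]
    rw [← Finset.sum_filter]
    have : ∀ R ∈ A.filter (fun R => ¬ S ∩ C ⊆ R),
        punif S ({R, S \ R} : Finset (Finset ι)) = 1 / ((2 : ℝ) ^ (s - 1) - 1) := by
      intro R _; rfl
    rw [Finset.sum_congr rfl this, Finset.sum_const, cardGood, nsmul_eq_mul]
    rw [Nat.cast_sub hpow]
    push_cast
    rw [mul_one_div]
  refine ⟨part1, ?_⟩
  -- attitude computation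
  set K := ((2 : ℝ) ^ (s - 1) - (2 : ℝ) ^ (s - r)) / ((2 : ℝ) ^ (s - 1) - 1) with hK
  have hbadsum : ∑ R ∈ A.filter (fun R => S ∩ C ⊆ R), (1 / ((2:ℝ) ^ (s-1) - 1))
      = ((2:ℕ) ^ (s - r) - 1 : ℕ) / ((2:ℝ) ^ (s-1) - 1) := by
    rw [Finset.sum_const, cardBad, nsmul_eq_mul, mul_one_div]
  have hatt : ∀ T ∈ (N \ S).powerset,
      attitude (unanimity C) (punif S) S T = if C \ S ⊆ T then K else 0 := by
    intro T hT
    rw [mem_powerset] at hT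
    have hTS : ∀ z ∈ T, z ∉ S := fun z hz => (mem_sdiff.mp (hT hz)).2
    have hvT : unanimity C T = 0 := if_neg (fun hcon => hTS x (hcon hxC) hxS)
    have hvST : unanimity C (S ∪ T) = if C \ S ⊆ T then 1 else 0 := by
      unfold unanimity
      refine if_congr ⟨fun h z hz => ?_, fun h z hz => ?_⟩ rfl rfl
      · rcases mem_union.mp (h (mem_sdiff.mp hz).1) with h' | h'
        · exact absurd h' (mem_sdiff.mp hz).2
        · exact h'
      · by_cases hzS : z ∈ S
        · exact mem_union_left _ hzS
        · exact mem_union_right _ (h (mem_sdiff.mpr ⟨hz, hzS⟩))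
    have hvB : ∀ R : Finset ι, R ⊆ S →
        unanimity C (R ∪ T) = if (C \ S ⊆ T ∧ S ∩ C ⊆ R) then 1 else 0 := by
      intro R hRS
      unfold unanimity
      refine if_congr ⟨fun h => ⟨fun z hz => ?_, fun z hz => ?_⟩, fun h z hz => ?_⟩ rfl rfl
      · rcases mem_union.mp (h (mem_sdiff.mp hz).1) with h' | h'
        · exact absurd (hRS h') (mem_sdiff.mp hz).2
        · exact h'
      · rcases mem_union.mp (h (mem_inter.mp hz).2) with h' | h'
        · exact h'
        · exact absurd (mem_inter.mp hz).1 (hTS z h')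
      · by_cases hzS : z ∈ S
        · exact mem_union_left _ (h.2 (mem_inter.mpr ⟨hzS, hz⟩))
        · exact mem_union_right _ (h.1 (mem_sdiff.mpr ⟨hz, hzS⟩))
    rw [attitude, hvT, hvST]
    rw [sum_Pi2_eq hxS (fun π => punif S π * ((∑ B ∈ π, unanimity C (B ∪ T)) - 2 * 0))]
    have hterm : ∀ R ∈ A,
        punif S ({R, S \ R} : Finset (Finset ι))
            * ((∑ B ∈ ({R, S \ R} : Finset (Finset ι)), unanimity C (B ∪ T)) - 2 * 0)
          = if (C \ S ⊆ T ∧ S ∩ C ⊆ R) then (1 / ((2:ℝ) ^ (s-1) - 1)) else 0 := by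
      intro R hR
      rw [hA, mem_filter, mem_powerset] at hR
      obtain ⟨hRS, hxR, _⟩ := hR
      have hRne : R ≠ S \ R := fun hcon => (mem_sdiff.mp (hcon ▸ hxR)).2 hxR
      rw [Finset.sum_pair hRne, hvB R hRS, hvB (S \ R) sdiff_subset]
      have h2' : ¬ (C \ S ⊆ T ∧ S ∩ C ⊆ S \ R) := fun hcon =>
        (mem_sdiff.mp (hcon.2 hxSC)).2 hxR
      rw [if_neg h2']
      have : punif S ({R, S \ R} : Finset (Finset ι)) = 1 / ((2:ℝ) ^ (s-1) - 1) := rfl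
      rw [this]
      by_cases hcase : C \ S ⊆ T ∧ S ∩ C ⊆ R
      · rw [if_pos hcase, if_pos hcase]; ring
      · rw [if_neg hcase, if_neg hcase]; ring
    rw [Finset.sum_congr rfl hterm]
    by_cases hCS : C \ S ⊆ T
    · rw [if_pos hCS, if_pos hCS]
      have : ∀ R ∈ A, (if (C \ S ⊆ T ∧ S ∩ C ⊆ R) then (1 / ((2:ℝ) ^ (s-1) - 1)) else 0)
          = if S ∩ C ⊆ R then (1 / ((2:ℝ) ^ (s-1) - 1)) else 0 := by
        intro R _
        refine if_congr ⟨fun h => h.2, fun h => ⟨hCS, h⟩⟩ rfl rfl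
      rw [Finset.sum_congr rfl this, ← Finset.sum_filter, hbadsum, hK]
      rw [Nat.cast_sub (Nat.one_le_two_pow)]
      push_cast
      field_simp
      ring
    · rw [if_neg hCS, if_neg hCS]
      have : ∀ R ∈ A, (if (C \ S ⊆ T ∧ S ∩ C ⊆ R) then (1 / ((2:ℝ) ^ (s-1) - 1)) else 0)
          = 0 := by
        intro R _
        exact if_neg (fun hcon => hCS hcon.1)
      rw [Finset.sum_congr rfl this, Finset.sum_const, smul_zero]
      ring
  -- assemble coop
  rw [coop, Finset.sum_congr rfl (fun T hT => by rw [hatt T hT])]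
  have : ∀ T ∈ (N \ S).powerset,
      qperm N S T * (if C \ S ⊆ T then K else 0)
        = if C \ S ⊆ T then qperm N S T * K else 0 := by
    intro T _
    by_cases h : C \ S ⊆ T
    · rw [if_pos h, if_pos h]
    · rw [if_neg h, if_neg h, mul_zero]
  rw [Finset.sum_congr rfl this, ← Finset.sum_filter, ← Finset.sum_mul]
  have hq : ∀ T ∈ (N \ S).powerset.filter (fun T => C \ S ⊆ T),
      qperm N S T = (T.card.factorial : ℝ) * (((N \ S).card - T.card).factorial : ℝ)
        / (((N \ S).card + 1).factorial : ℝ) := by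
    intro T _
    rw [qperm, card_sdiff_of_subset hS]
  rw [Finset.sum_congr rfl hq, qsum (N \ S) (C \ S) (sdiff_subset_sdiff hCN le_rfl)]
  have hCSc : (C \ S).card = c - r := by
    rw [show C \ S = C \ (S ∩ C) from by ext z; simp [mem_sdiff, mem_inter],
      card_sdiff_of_subset inter_subset_right]
  rw [hCSc, Nat.cast_sub hrc, hK, one_div_mul_eq_div, div_div]
end

section
/- Let u_C be the unanimity game on N for ∅ ≠ C ⊊ N, and S ⊆ N with |S| = s ≥ 2, |S ∩ C| = r with 1 ≤ r ≤ s-1, |C| = c. The probability under the permutation-based internal family p^r that a random 2-partition {S₁,S₂} of S has both parts meeting S ∩ C in a proper nonempty subset equals (s+1)(r-1)/((s-1)(r+1)); consequently the Shapley–Owen coopetition index satisfies C^{u_C}_{p^r,q^r}(S) = (s+1)(r-1)/((s-1)(r+1)(c-r+1)). -/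
open Finset

lemma nat_key (m r : ℕ) :
    ∑ k ∈ range (m+1), m.choose k * (k.factorial * (m + r - k).factorial)
      = m.factorial * r.factorial * (m + r + 1).choose (r + 1) := by
  have h : ∀ k ∈ range (m+1), m.choose k * (k.factorial * (m+r-k).factorial)
      = m.factorial * r.factorial * (m + r - k).choose r := by
    intro k hk
    rw [mem_range, Nat.lt_succ_iff] at hk
    have h1 : m.choose k * k.factorial * (m-k).factorial = m.factorial :=
      Nat.choose_mul_factorial_mul_factorial hk
    have h2 : (m+r-k).choose r * r.factorial * (m+r-k-r).factorial = (m+r-k).factorial :=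
      Nat.choose_mul_factorial_mul_factorial (by omega)
    have h3 : m + r - k - r = m - k := by omega
    rw [h3] at h2
    apply Nat.eq_of_mul_eq_mul_right (Nat.factorial_pos (m-k))
    calc m.choose k * (k.factorial * (m+r-k).factorial) * (m-k).factorial
        = (m.choose k * k.factorial * (m-k).factorial) * (m+r-k).factorial := by ring
      _ = m.factorial * (m+r-k).factorial := by rw [h1]
      _ = m.factorial * ((m+r-k).choose r * r.factorial * (m-k).factorial) := by rw [h2]
      _ = m.factorial * r.factorial * (m+r-k).choose r * (m-k).factorial := by ring
  rw [Finset.sum_congr rfl h, ← Finset.mul_sum]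
  congr 1
  have hrefl := Finset.sum_range_reflect (fun i => (i + r).choose r) (m+1)
  have : ∀ k ∈ range (m+1), (m + r - k).choose r = (m + 1 - 1 - k + r).choose r := by
    intro k hk; rw [mem_range, Nat.lt_succ_iff] at hk; congr 1; omega
  rw [Finset.sum_congr rfl this, hrefl, Nat.sum_range_add_choose]

lemma nat_key2 (m r : ℕ) :
    ∑ k ∈ range (m+1), m.choose k * ((k+r).factorial * (m-k).factorial)
      = m.factorial * r.factorial * (m + r + 1).choose (r + 1) := by
  rw [← nat_key m r]
  rw [← Finset.sum_range_reflect (fun k => m.choose k * (k.factorial * (m + r - k).factorial)) (m+1)]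
  apply Finset.sum_congr rfl
  intro k hk
  rw [mem_range, Nat.lt_succ_iff] at hk
  have e1 : m + 1 - 1 - k = m - k := by omega
  have e2 : m + r - (m - k) = k + r := by omega
  rw [e1, e2, Nat.choose_symm hk]; ring

lemma sum_powg {ι : Type*} [DecidableEq ι] (A : Finset ι) (g : ℕ → ℝ) :
    ∑ R ∈ A.powerset, g R.card = ∑ k ∈ range (A.card + 1), (A.card.choose k : ℝ) * g k := by
  rw [Finset.sum_powerset_apply_card]
  simp only [nsmul_eq_mul]

lemma sum_pair_image {ι : Type*} [DecidableEq ι] (S : Finset ι) (b : Finset (Finset ι))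
    (hsub : ∀ R ∈ b, R ⊆ S ∧ R ≠ ∅) (hcl : ∀ R ∈ b, S \ R ∈ b)
    (g : Finset (Finset ι) → ℝ) :
    ∑ π ∈ b.image (fun R => ({R, S \ R} : Finset (Finset ι))), g π
      = ∑ R ∈ b, g {R, S \ R} / 2 := by
  apply Finset.sum_image' (fun R => g {R, S \ R} / 2)
  intro R hR
  obtain ⟨hRS, hRne⟩ := hsub R hR
  have hsd : S \ (S \ R) = R := by
    rw [sdiff_sdiff_right_self, inf_eq_inter, Finset.inter_eq_right.2 hRS]
  have hne : R ≠ S \ R := by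
    intro h
    apply hRne
    have : Disjoint R (S \ R) := Finset.disjoint_sdiff
    rw [← h] at this
    exact disjoint_self.1 this
  have hfib : b.filter (fun R' => ({R', S \ R'} : Finset (Finset ι)) = {R, S \ R})
      = ({R, S \ R} : Finset (Finset ι)) := by
    ext R'
    simp only [Finset.mem_filter, Finset.mem_insert, Finset.mem_singleton]
    constructor
    · rintro ⟨-, heq⟩
      have : R' ∈ ({R', S \ R'} : Finset (Finset ι)) := Finset.mem_insert_self _ _
      rw [heq] at this
      simpa using this
    · rintro (rfl | rfl)
      · exact ⟨hR, rfl⟩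
      · refine ⟨hcl R hR, ?_⟩
        rw [hsd, Finset.pair_comm]
  rw [hfib, Finset.sum_pair hne, hsd, Finset.pair_comm (S \ R) R]
  ring

lemma sum_Pi2_filter {ι : Type*} [DecidableEq ι] (S : Finset ι)
    (P : Finset (Finset ι) → Prop) [DecidablePred P] (g : Finset (Finset ι) → ℝ) :
    ∑ π ∈ (Pi2 S).filter P, g π
      = ∑ R ∈ S.powerset.filter (fun R => (R ≠ ∅ ∧ R ≠ S) ∧ P {R, S \ R}),
          g {R, S \ R} / 2 := by
  rw [Pi2, Finset.filter_image, Finset.filter_filter]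
  apply sum_pair_image
  · intro R hR
    simp only [Finset.mem_filter, Finset.mem_powerset] at hR
    exact ⟨hR.1, hR.2.1.1⟩
  · intro R hR
    simp only [Finset.mem_filter, Finset.mem_powerset] at hR ⊢
    obtain ⟨hRS, ⟨hne, hneS⟩, hP⟩ := hR
    have hsd : S \ (S \ R) = R := by
      rw [sdiff_sdiff_right_self, inf_eq_inter, Finset.inter_eq_right.2 hRS]
    refine ⟨Finset.sdiff_subset, ⟨?_, ?_⟩, ?_⟩
    · intro h
      exact hneS (Finset.Subset.antisymm hRS (Finset.sdiff_eq_empty_iff_subset.1 h))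
    · intro h
      apply hne
      have : Disjoint R (S \ R) := Finset.disjoint_sdiff
      rw [h] at this
      exact disjoint_self.1 (this.mono_right hRS)
    · rw [hsd, Finset.pair_comm]
      exact hP

lemma ppair {ι : Type*} [DecidableEq ι] (S R : Finset ι) (hRS : R ⊆ S) (hRne : R ≠ ∅) :
    pperm S {R, S \ R} = 2 * ((R.card.factorial : ℝ) * ((S.card - R.card).factorial : ℝ))
      / (((S.card : ℝ) - 1) * (S.card.factorial : ℝ)) := by
  have hne : R ≠ S \ R := by
    intro h
    apply hRne
    have : Disjoint R (S \ R) := Finset.disjoint_sdiff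
    rw [← h] at this
    exact disjoint_self.1 this
  rw [pperm, Finset.prod_pair hne, Finset.card_sdiff_of_subset hRS]

lemma sum_pow_w {ι : Type*} [DecidableEq ι] (A : Finset ι) (s : ℕ) (h : A.card ≤ s) :
    ∑ R ∈ A.powerset, ((R.card.factorial : ℝ) * ((s - R.card).factorial : ℝ))
      = ((A.card.factorial * (s - A.card).factorial * (s+1).choose (s - A.card + 1) : ℕ) : ℝ) := by
  rw [sum_powg A (fun k => ((k.factorial : ℝ) * ((s - k).factorial : ℝ)))]
  have key := nat_key A.card (s - A.card)
  have hms : A.card + (s - A.card) = s := by omega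
  rw [hms] at key
  rw [← key]
  push_cast
  ring

lemma sum_pow_w2 {ι : Type*} [DecidableEq ι] (A : Finset ι) (s r : ℕ) (h : A.card + r = s) :
    ∑ R ∈ A.powerset, (((R.card + r).factorial : ℝ) * ((s - R.card - r).factorial : ℝ))
      = ((A.card.factorial * r.factorial * (s+1).choose (r + 1) : ℕ) : ℝ) := by
  rw [sum_powg A (fun k => (((k + r).factorial : ℝ) * ((s - k - r).factorial : ℝ)))]
  have key := nat_key2 A.card r
  rw [h] at key
  rw [← key]
  push_cast
  apply Finset.sum_congr rfl
  intro k hk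
  rw [mem_range, Nat.lt_succ_iff] at hk
  have h2 : s - k - r = A.card - k := by omega
  rw [h2]

lemma straddle_iff {ι : Type*} [DecidableEq ι] (S C R : Finset ι) (hRS : R ⊆ S) :
    (∀ B ∈ ({R, S \ R} : Finset (Finset ι)), B ∩ C ≠ ∅ ∧ B ∩ C ≠ S ∩ C)
      ↔ (R ∩ (S ∩ C) ≠ ∅ ∧ ¬ S ∩ C ⊆ R) := by
  have e1 : R ∩ C = R ∩ (S ∩ C) := by
    ext x; simp only [Finset.mem_inter]
    exact ⟨fun h => ⟨h.1, hRS h.1, h.2⟩, fun h => ⟨h.1, h.2.2⟩⟩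
  have e2 : (S \ R) ∩ C = (S ∩ C) \ R := by
    ext x; simp only [Finset.mem_inter, Finset.mem_sdiff]; tauto
  have f1 : R ∩ (S ∩ C) = S ∩ C ↔ S ∩ C ⊆ R := Finset.inter_eq_right
  have f2 : (S ∩ C) \ R = ∅ ↔ S ∩ C ⊆ R := Finset.sdiff_eq_empty_iff_subset
  have f3 : (S ∩ C) \ R = S ∩ C ↔ R ∩ (S ∩ C) = ∅ := by
    rw [Finset.sdiff_eq_self_iff_disjoint, disjoint_comm, Finset.disjoint_iff_inter_eq_empty]
  constructor
  · intro hB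
    obtain ⟨h1, _⟩ := hB R (Finset.mem_insert_self _ _)
    obtain ⟨h3, _⟩ := hB (S \ R) (by simp)
    rw [e1] at h1
    rw [e2] at h3
    exact ⟨h1, fun hsub => h3 (f2.2 hsub)⟩
  · rintro ⟨h1, h2⟩ B hB
    simp only [Finset.mem_insert, Finset.mem_singleton] at hB
    rcases hB with rfl | rfl
    · rw [e1]; exact ⟨h1, fun h => h2 (f1.1 h)⟩
    · rw [e2]; exact ⟨fun h => h2 (f2.1 h), fun h => h1 (f3.1 h)⟩

lemma w_total {ι : Type*} [DecidableEq ι] (S : Finset ι) (s : ℕ) (hs : S.card = s)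
    (hne : S ≠ ∅) :
    ∑ R ∈ S.powerset.filter (fun R => R ≠ ∅ ∧ R ≠ S),
        ((R.card.factorial : ℝ) * ((s - R.card).factorial : ℝ))
      = ((s : ℝ) + 1) * (s.factorial : ℝ) - 2 * (s.factorial : ℝ) := by
  have h0 := Finset.sum_filter_add_sum_filter_not S.powerset (fun R => R ≠ ∅ ∧ R ≠ S)
    (fun R => ((R.card.factorial : ℝ) * ((s - R.card).factorial : ℝ)))
  have hpair : S.powerset.filter (fun R => ¬(R ≠ ∅ ∧ R ≠ S)) = {∅, S} := by
    ext R
    simp only [Finset.mem_filter, Finset.mem_powerset, Finset.mem_insert, Finset.mem_singleton,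
      not_and_or, not_not]
    constructor
    · rintro ⟨-, h⟩; exact h
    · rintro (rfl | rfl)
      · exact ⟨Finset.empty_subset _, Or.inl rfl⟩
      · exact ⟨Finset.Subset.refl _, Or.inr rfl⟩
  have hES : (∅ : Finset ι) ≠ S := fun h => hne h.symm
  have htot := sum_pow_w S s (le_of_eq hs)
  rw [hs] at htot
  rw [hpair, Finset.sum_pair hES] at h0
  simp only [Finset.card_empty, Nat.sub_zero, Nat.factorial_zero, Nat.cast_one, one_mul,
    hs, Nat.sub_self] at h0
  rw [htot] at h0
  simp only [Nat.sub_self, Nat.factorial_zero, Nat.choose_one_right] at h0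
  push_cast [Nat.choose_one_right] at h0 ⊢
  linarith [h0]

lemma w_straddle {ι : Type*} [DecidableEq ι] (S C : Finset ι) (s r : ℕ)
    (hs : S.card = s) (hr : (S ∩ C).card = r)
    (h2s : 2 ≤ s) (h1r : 1 ≤ r) (hrs : r ≤ s - 1) :
    ∑ R ∈ S.powerset.filter
        (fun R => (R ≠ ∅ ∧ R ≠ S) ∧ (R ∩ (S ∩ C) ≠ ∅ ∧ ¬ S ∩ C ⊆ R)),
        ((R.card.factorial : ℝ) * ((s - R.card).factorial : ℝ))
      = ((s : ℝ) + 1) * (s.factorial : ℝ)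
        - 2 * (((s - r).factorial * r.factorial * (s+1).choose (r+1) : ℕ) : ℝ) := by
  classical
  set C' := S ∩ C with hC'
  set w : Finset ι → ℝ := fun R => ((R.card.factorial : ℝ) * ((s - R.card).factorial : ℝ))
    with hw
  have hC'S : C' ⊆ S := Finset.inter_subset_left
  have hC'card : C'.card = r := hr
  have hC'ne : C' ≠ ∅ := by
    intro h
    rw [h, Finset.card_empty] at hC'card
    omega
  have hrs' : r ≤ s := by omega
  have hSne : S ≠ ∅ := by
    intro h
    rw [h, Finset.card_empty] at hs
    omega
  -- A = S \ C'
  set A : Finset ι := S \ C' with hA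
  have hAcard : A.card = s - r := by rw [hA, Finset.card_sdiff_of_subset hC'S, hs, hC'card]
  -- split the props sum
  have hsplit := Finset.sum_filter_add_sum_filter_not
    (S.powerset.filter (fun R => R ≠ ∅ ∧ R ≠ S))
    (fun R => R ∩ C' ≠ ∅ ∧ ¬ C' ⊆ R) w
  have hsplit2 := Finset.sum_filter_add_sum_filter_not
    ((S.powerset.filter (fun R => R ≠ ∅ ∧ R ≠ S)).filter
      (fun R => ¬(R ∩ C' ≠ ∅ ∧ ¬ C' ⊆ R)))
    (fun R => R ∩ C' = ∅) w
  -- identify the two complementary pieces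
  have hB1 : (((S.powerset.filter (fun R => R ≠ ∅ ∧ R ≠ S)).filter
      (fun R => ¬(R ∩ C' ≠ ∅ ∧ ¬ C' ⊆ R))).filter (fun R => R ∩ C' = ∅))
      = A.powerset.filter (fun R => R ≠ ∅) := by
    ext R
    simp only [Finset.mem_filter, Finset.mem_powerset, not_and_or, not_not, hA,
      Finset.subset_sdiff]
    constructor
    · rintro ⟨⟨⟨hRS, hne, -⟩, -⟩, hint⟩
      exact ⟨⟨hRS, Finset.disjoint_iff_inter_eq_empty.2 hint⟩, hne⟩
    · rintro ⟨⟨hRS, hdisj⟩, hne⟩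
      have hint : R ∩ C' = ∅ := Finset.disjoint_iff_inter_eq_empty.1 hdisj
      have hRneS : R ≠ S := by
        rintro rfl
        have : C' = ∅ := by
          have h1 : C' ⊆ R := hC'S
          rw [← Finset.inter_eq_right.2 h1, hint]
        exact hC'ne this
      exact ⟨⟨⟨hRS, hne, hRneS⟩, Or.inl hint⟩, hint⟩
  have hB2 : (((S.powerset.filter (fun R => R ≠ ∅ ∧ R ≠ S)).filter
      (fun R => ¬(R ∩ C' ≠ ∅ ∧ ¬ C' ⊆ R))).filter (fun R => ¬ R ∩ C' = ∅))
      = (A.powerset.filter (fun R => R ≠ A)).image (fun R => R ∪ C') := by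
    ext R
    simp only [Finset.mem_filter, Finset.mem_powerset, Finset.mem_image, not_and_or, not_not]
    constructor
    · rintro ⟨⟨⟨hRS, hne, hneS⟩, hdisj⟩, hint⟩
      have hsub : C' ⊆ R := by
        rcases hdisj with h | h
        · exact absurd h hint
        · exact h
      refine ⟨R \ C', ⟨?_, ?_⟩, ?_⟩
      · rw [hA]
        exact Finset.sdiff_subset_sdiff hRS (Finset.Subset.refl _)
      · intro h
        apply hneS
        have : R = R \ C' ∪ C' := (Finset.sdiff_union_of_subset hsub).symm
        rw [this, h, hA, Finset.sdiff_union_of_subset hC'S]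
      · exact Finset.sdiff_union_of_subset hsub
    · rintro ⟨R', ⟨hR'A, hR'ne⟩, rfl⟩
      have hdisj : Disjoint R' C' := by
        rw [hA, Finset.subset_sdiff] at hR'A
        exact hR'A.2
      have hR'S : R' ⊆ S := by
        rw [hA, Finset.subset_sdiff] at hR'A
        exact hR'A.1
      refine ⟨⟨⟨Finset.union_subset hR'S hC'S, ?_, ?_⟩, Or.inr Finset.subset_union_right⟩, ?_⟩
      · intro h
        exact hC'ne (Finset.union_eq_empty.1 h).2
      · intro h
        apply hR'ne
        have h1 : A ⊆ R' ∪ C' := by rw [h]; exact Finset.sdiff_subset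
        have h2 : A ⊆ R' := by
          intro x hx
          rcases Finset.mem_union.1 (h1 hx) with h3 | h3
          · exact h3
          · exact absurd h3 (Finset.mem_sdiff.1 (hA ▸ hx)).2
        exact Finset.Subset.antisymm hR'A h2
      · intro h
        apply hC'ne
        have h2 : C' ⊆ (R' ∪ C') ∩ C' :=
          Finset.subset_inter Finset.subset_union_right (Finset.Subset.refl _)
        rw [h] at h2
        exact Finset.subset_empty.1 h2
  -- evaluate sum over B1
  have hB1sum : ∑ R ∈ A.powerset.filter (fun R => R ≠ ∅), w R
      = (((s - r).factorial * r.factorial * (s+1).choose (r+1) : ℕ) : ℝ)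
        - (s.factorial : ℝ) := by
    rw [Finset.filter_ne', Finset.sum_erase_eq_sub (Finset.empty_mem_powerset A)]
    have := sum_pow_w A s (by omega)
    rw [hAcard] at this
    have h1 : s - (s - r) = r := by omega
    rw [h1] at this
    rw [hw]
    simp only [this, Finset.card_empty, Nat.sub_zero, Nat.factorial_zero, Nat.cast_one, one_mul]
  -- evaluate sum over B2
  have hB2sum : ∑ R ∈ (A.powerset.filter (fun R => R ≠ A)).image (fun R => R ∪ C'), w R
      = (((s - r).factorial * r.factorial * (s+1).choose (r+1) : ℕ) : ℝ)
        - (s.factorial : ℝ) := by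
    have hinj : ∀ x ∈ A.powerset.filter (fun R => R ≠ A), ∀ y ∈ A.powerset.filter (fun R => R ≠ A),
        x ∪ C' = y ∪ C' → x = y := by
      intro x hx y hy hxy
      simp only [Finset.mem_filter, Finset.mem_powerset] at hx hy
      have hdx : Disjoint x C' := by
        rw [hA, Finset.subset_sdiff] at hx
        exact hx.1.2
      have hdy : Disjoint y C' := by
        rw [hA, Finset.subset_sdiff] at hy
        exact hy.1.2
      have := congrArg (fun t => t \ C') hxy
      simpa [Finset.union_sdiff_cancel_right hdx, Finset.union_sdiff_cancel_right hdy]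
        using this
    rw [Finset.sum_image hinj]
    · have hcong : ∀ R ∈ A.powerset.filter (fun R => R ≠ A),
          w (R ∪ C') = (((R.card + r).factorial : ℝ) * ((s - R.card - r).factorial : ℝ)) := by
        intro R hR
        simp only [Finset.mem_filter, Finset.mem_powerset] at hR
        have hdisj : Disjoint R C' := by
          rw [hA, Finset.subset_sdiff] at hR
          exact hR.1.2
        rw [hw]
        simp only [Finset.card_union_of_disjoint hdisj, hC'card]
        have he : s - (R.card + r) = s - R.card - r := by omega
        rw [he]
      rw [Finset.sum_congr rfl hcong, Finset.filter_ne',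
        Finset.sum_erase_eq_sub (Finset.mem_powerset_self A)]
      have := sum_pow_w2 A s r (by omega)
      rw [this, hAcard]
      have h1 : s - r + r = s := by omega
      have h2 : s - (s - r) - r = 0 := by omega
      rw [h1, h2]
      simp
  -- total
  have htot := w_total S s hs hSne
  -- combine
  rw [hB1, hB2] at hsplit2
  rw [hB1sum, hB2sum] at hsplit2
  rw [← hsplit] at htot
  have hgoal : ∑ R ∈ (S.powerset.filter (fun R => R ≠ ∅ ∧ R ≠ S)).filter
      (fun R => R ∩ C' ≠ ∅ ∧ ¬ C' ⊆ R), w R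
      = ((s : ℝ) + 1) * (s.factorial : ℝ)
        - 2 * (((s - r).factorial * r.factorial * (s+1).choose (r+1) : ℕ) : ℝ) := by
    linarith [htot, hsplit2]
  rw [← hgoal, Finset.filter_filter]

lemma internal_sum {ι : Type*} [DecidableEq ι] (S C : Finset ι) (s r : ℕ)
    (hs : S.card = s) (hr : (S ∩ C).card = r)
    (h2s : 2 ≤ s) (h1r : 1 ≤ r) (hrs : r ≤ s - 1) :
    (∑ π ∈ (Pi2 S).filter (fun π => ∀ B ∈ π, B ∩ C ≠ ∅ ∧ B ∩ C ≠ S ∩ C), pperm S π)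
        = ((s : ℝ) + 1) * ((r : ℝ) - 1) / (((s : ℝ) - 1) * ((r : ℝ) + 1)) := by
  classical
  rw [sum_Pi2_filter]
  have hfc : S.powerset.filter
      (fun R => (R ≠ ∅ ∧ R ≠ S) ∧ ∀ B ∈ ({R, S \ R} : Finset (Finset ι)),
        B ∩ C ≠ ∅ ∧ B ∩ C ≠ S ∩ C)
      = S.powerset.filter
      (fun R => (R ≠ ∅ ∧ R ≠ S) ∧ (R ∩ (S ∩ C) ≠ ∅ ∧ ¬ S ∩ C ⊆ R)) := by
    apply Finset.filter_congr
    intro R hR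
    rw [Finset.mem_powerset] at hR
    rw [straddle_iff S C R hR]
  rw [hfc]
  have hsum : ∀ R ∈ S.powerset.filter
      (fun R => (R ≠ ∅ ∧ R ≠ S) ∧ (R ∩ (S ∩ C) ≠ ∅ ∧ ¬ S ∩ C ⊆ R)),
      pperm S {R, S \ R} / 2
        = ((R.card.factorial : ℝ) * ((s - R.card).factorial : ℝ))
          / (((s : ℝ) - 1) * (s.factorial : ℝ)) := by
    intro R hR
    simp only [Finset.mem_filter, Finset.mem_powerset] at hR
    rw [ppair S R hR.1 hR.2.1.1, hs]
    ring
  rw [Finset.sum_congr rfl hsum, ← Finset.sum_div,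
    w_straddle S C s r hs hr h2s h1r hrs]
  -- final arithmetic
  have hrs' : r ≤ s := by omega
  have hP : ((s - r).factorial : ℝ) * (r.factorial : ℝ) * (((s+1).choose (r+1) : ℕ) : ℝ)
        * ((r : ℝ) + 1)
      = ((s : ℝ) + 1) * (s.factorial : ℝ) := by
    have h := Nat.choose_mul_factorial_mul_factorial (show r + 1 ≤ s + 1 by omega)
    rw [show s + 1 - (r + 1) = s - r by omega, Nat.factorial_succ r, Nat.factorial_succ s] at h
    have h' := congrArg (fun n : ℕ => (n : ℝ)) h
    push_cast at h'
    linear_combination h'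
  have h1 : ((s : ℝ) - 1) ≠ 0 := by
    have : (2 : ℝ) ≤ (s : ℝ) := by exact_mod_cast h2s
    intro h; linarith
  have h2 : (s.factorial : ℝ) ≠ 0 := Nat.cast_ne_zero.2 (Nat.factorial_ne_zero s)
  have h3 : ((r : ℝ) + 1) ≠ 0 := by positivity
  push_cast
  rw [div_eq_div_iff (by exact mul_ne_zero h1 h2) (by exact mul_ne_zero h1 h3)]
  linear_combination (-2 * ((s : ℝ) - 1)) * hP

lemma internal_total {ι : Type*} [DecidableEq ι] (S : Finset ι) (s : ℕ)
    (hs : S.card = s) (h2s : 2 ≤ s) :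
    ∑ π ∈ Pi2 S, pperm S π = 1 := by
  classical
  have hSne : S ≠ ∅ := by
    intro h; rw [h, Finset.card_empty] at hs; omega
  have h := sum_Pi2_filter S (fun _ => True) (pperm S)
  simp only [Finset.filter_true, and_true] at h
  rw [h]
  have hsum : ∀ R ∈ S.powerset.filter (fun R => R ≠ ∅ ∧ R ≠ S),
      pperm S {R, S \ R} / 2
        = ((R.card.factorial : ℝ) * ((s - R.card).factorial : ℝ))
          / (((s : ℝ) - 1) * (s.factorial : ℝ)) := by
    intro R hR
    simp only [Finset.mem_filter, Finset.mem_powerset] at hR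
    rw [ppair S R hR.1 hR.2.1, hs]
    ring
  rw [Finset.sum_congr rfl hsum, ← Finset.sum_div, w_total S s hs hSne]
  have h1 : ((s : ℝ) - 1) ≠ 0 := by
    have : (2 : ℝ) ≤ (s : ℝ) := by exact_mod_cast h2s
    intro h; linarith
  have h2 : (s.factorial : ℝ) ≠ 0 := Nat.cast_ne_zero.2 (Nat.factorial_ne_zero s)
  field_simp
  ring

lemma external_sum {ι : Type*} [DecidableEq ι] (N S C : Finset ι) (d : ℕ)
    (hS : S ⊆ N) (hCN : C ⊆ N) (hd : (C \ S).card = d) :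
    ∑ T ∈ (N \ S).powerset.filter (fun T => C \ S ⊆ T), qperm N S T
      = 1 / ((d : ℝ) + 1) := by
  classical
  set M : Finset ι := N \ S with hM
  set D : Finset ι := C \ S with hD
  have hDM : D ⊆ M := Finset.sdiff_subset_sdiff hCN (Finset.Subset.refl _)
  have hm : N.card - S.card = M.card := by rw [hM, Finset.card_sdiff_of_subset hS]
  have hdm : d ≤ M.card := hd ▸ Finset.card_le_card hDM
  have hAcard : (M \ D).card = M.card - d := by rw [Finset.card_sdiff_of_subset hDM, hd]
  -- identify the filtered set as an image
  have hset : M.powerset.filter (fun T => D ⊆ T)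
      = ((M \ D).powerset).image (fun T => T ∪ D) := by
    ext T
    simp only [Finset.mem_filter, Finset.mem_powerset, Finset.mem_image]
    constructor
    · rintro ⟨hTM, hDT⟩
      exact ⟨T \ D, Finset.sdiff_subset_sdiff hTM (Finset.Subset.refl _),
        Finset.sdiff_union_of_subset hDT⟩
    · rintro ⟨T', hT', rfl⟩
      refine ⟨Finset.union_subset (hT'.trans Finset.sdiff_subset) hDM,
        Finset.subset_union_right⟩
  rw [hset]
  have hinj : ∀ x ∈ (M \ D).powerset, ∀ y ∈ (M \ D).powerset,
      x ∪ D = y ∪ D → x = y := by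
    intro x hx y hy hxy
    rw [Finset.mem_powerset, Finset.subset_sdiff] at hx hy
    have := congrArg (fun t => t \ D) hxy
    simpa [Finset.union_sdiff_cancel_right hx.2, Finset.union_sdiff_cancel_right hy.2]
      using this
  rw [Finset.sum_image hinj]
  have hcong : ∀ T' ∈ (M \ D).powerset, qperm N S (T' ∪ D)
      = (((T'.card + d).factorial : ℝ) * ((M.card - T'.card - d).factorial : ℝ))
          / (((M.card + 1).factorial : ℝ)) := by
    intro T' hT'
    rw [Finset.mem_powerset, Finset.subset_sdiff] at hT'
    rw [qperm, Finset.card_union_of_disjoint hT'.2, hd, hm,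
      show M.card - (T'.card + d) = M.card - T'.card - d by omega]
  rw [Finset.sum_congr rfl hcong, ← Finset.sum_div]
  rw [sum_pow_w2 (M \ D) M.card d (by omega)]
  rw [hAcard]
  -- final arithmetic
  have hQ := Nat.choose_mul_factorial_mul_factorial (show d + 1 ≤ M.card + 1 by omega)
  rw [show M.card + 1 - (d + 1) = M.card - d by omega, Nat.factorial_succ d] at hQ
  have hQ' := congrArg (fun n : ℕ => (n : ℝ)) hQ
  push_cast at hQ' ⊢
  have h1 : ((M.card + 1).factorial : ℝ) ≠ 0 := Nat.cast_ne_zero.2 (Nat.factorial_ne_zero _)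
  have h2 : ((d : ℝ) + 1) ≠ 0 := by positivity
  rw [div_eq_div_iff h1 h2]
  linear_combination hQ'

lemma mem_Pi2 {ι : Type*} [DecidableEq ι] {S : Finset ι} {π : Finset (Finset ι)}
    (hπ : π ∈ Pi2 S) :
    ∃ R, R ⊆ S ∧ R ≠ ∅ ∧ R ≠ S ∧ π = {R, S \ R} := by
  rw [Pi2, Finset.mem_image] at hπ
  obtain ⟨R, hR, rfl⟩ := hπ
  simp only [Finset.mem_filter, Finset.mem_powerset] at hR
  exact ⟨R, hR.1, hR.2.1, hR.2.2, rfl⟩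

lemma ne_sdiff_self {ι : Type*} [DecidableEq ι] {S R : Finset ι} (hRne : R ≠ ∅) :
    R ≠ S \ R := by
  intro h
  apply hRne
  have : Disjoint R (S \ R) := Finset.disjoint_sdiff
  rw [← h] at this
  exact disjoint_self.1 this

lemma att_zero {ι : Type*} [DecidableEq ι] (N C S T : Finset ι)
    (p : Finset (Finset ι) → ℝ)
    (_hT : T ⊆ N \ S) (hnot : ¬ C \ S ⊆ T) :
    attitude (unanimity C) p S T = 0 := by
  have key : ∀ B : Finset ι, B ⊆ S → unanimity C (B ∪ T) = 0 := by
    intro B hBS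
    rw [unanimity, if_neg]
    intro hCBT
    apply hnot
    intro x hx
    rw [Finset.mem_sdiff] at hx
    rcases Finset.mem_union.1 (hCBT hx.1) with h | h
    · exact absurd (hBS h) hx.2
    · exact h
  have hvT : unanimity C T = 0 := by
    rw [unanimity, if_neg]
    intro hCT
    apply hnot
    exact fun x hx => hCT (Finset.mem_sdiff.1 hx).1
  have hvST : unanimity C (S ∪ T) = 0 := key S (Finset.Subset.refl S)
  rw [attitude, hvT, hvST]
  have : ∀ π ∈ Pi2 S, p π * ((∑ B ∈ π, unanimity C (B ∪ T)) - 2 * 0) = 0 := by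
    intro π hπ
    obtain ⟨R, hRS, hRne, hRneS, rfl⟩ := mem_Pi2 hπ
    rw [Finset.sum_pair (ne_sdiff_self hRne), key R hRS, key (S \ R) Finset.sdiff_subset]
    ring
  rw [Finset.sum_congr rfl this]
  simp

lemma att_one {ι : Type*} [DecidableEq ι] (N C S T : Finset ι)
    (hT : T ⊆ N \ S) (hsub : C \ S ⊆ T) (hSC : S ∩ C ≠ ∅) (h2s : 2 ≤ S.card) :
    attitude (unanimity C) (pperm S) S T
      = ∑ π ∈ (Pi2 S).filter (fun π => ∀ B ∈ π, B ∩ C ≠ ∅ ∧ B ∩ C ≠ S ∩ C), pperm S π := by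
  classical
  have hTS : Disjoint T S := (Finset.subset_sdiff.1 hT).2
  have hvT : unanimity C T = 0 := by
    rw [unanimity, if_neg]
    intro hCT
    obtain ⟨x, hx⟩ := Finset.nonempty_iff_ne_empty.2 hSC
    rw [Finset.mem_inter] at hx
    exact (Finset.disjoint_left.1 hTS) (hCT hx.2) hx.1
  have hvST : unanimity C (S ∪ T) = 1 := by
    rw [unanimity, if_pos]
    intro x hx
    by_cases hxS : x ∈ S
    · exact Finset.mem_union_left _ hxS
    · exact Finset.mem_union_right _ (hsub (Finset.mem_sdiff.2 ⟨hx, hxS⟩))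
  have hCsub : ∀ B : Finset ι, B ⊆ S → (C ⊆ B ∪ T ↔ S ∩ C ⊆ B) := by
    intro B hBS
    constructor
    · intro h x hx
      rw [Finset.mem_inter] at hx
      rcases Finset.mem_union.1 (h hx.2) with h1 | h1
      · exact h1
      · exact absurd hx.1 (Finset.disjoint_left.1 hTS h1)
    · intro h x hx
      by_cases hxS : x ∈ S
      · exact Finset.mem_union_left _ (h (Finset.mem_inter.2 ⟨hxS, hx⟩))
      · exact Finset.mem_union_right _ (hsub (Finset.mem_sdiff.2 ⟨hx, hxS⟩))
  have hπkey : ∀ π ∈ Pi2 S, (∑ B ∈ π, unanimity C (B ∪ T))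
      = if (∀ B ∈ π, B ∩ C ≠ ∅ ∧ B ∩ C ≠ S ∩ C) then 0 else 1 := by
    intro π hπ
    obtain ⟨R, hRS, hRne, hRneS, rfl⟩ := mem_Pi2 hπ
    rw [Finset.sum_pair (ne_sdiff_self hRne)]
    rw [if_congr (straddle_iff S C R hRS) rfl rfl]
    rw [unanimity, if_congr (hCsub R hRS) rfl rfl,
      unanimity, if_congr (hCsub (S \ R) Finset.sdiff_subset) rfl rfl]
    obtain ⟨y, hy⟩ := Finset.nonempty_iff_ne_empty.2 hSC
    by_cases hc1 : S ∩ C ⊆ R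
    · rw [if_pos hc1, if_neg, if_neg]
      · ring
      · rintro ⟨-, h2⟩; exact h2 hc1
      · intro h
        exact (Finset.mem_sdiff.1 (h hy)).2 (hc1 hy)
    · by_cases hc2 : R ∩ (S ∩ C) = ∅
      · rw [if_neg hc1, if_pos, if_neg]
        · ring
        · rintro ⟨h1, -⟩; exact h1 hc2
        · intro x hx
          rw [Finset.mem_sdiff]
          refine ⟨(Finset.mem_inter.1 hx).1, fun hxR => ?_⟩
          have : x ∈ R ∩ (S ∩ C) := Finset.mem_inter.2 ⟨hxR, hx⟩
          rw [hc2] at this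
          exact absurd this (Finset.notMem_empty x)
      · rw [if_neg hc1, if_neg, if_pos ⟨hc2, hc1⟩]
        · ring
        · intro h
          obtain ⟨x, hx⟩ := Finset.nonempty_iff_ne_empty.2 hc2
          rw [Finset.mem_inter] at hx
          exact (Finset.mem_sdiff.1 (h hx.2)).2 hx.1
  rw [attitude, hvT, hvST]
  have hterm : ∀ π ∈ Pi2 S,
      pperm S π * ((∑ B ∈ π, unanimity C (B ∪ T)) - 2 * 0)
        = pperm S π - (if (∀ B ∈ π, B ∩ C ≠ ∅ ∧ B ∩ C ≠ S ∩ C) then pperm S π else 0) := by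
    intro π hπ
    rw [hπkey π hπ]
    split <;> ring
  rw [Finset.sum_congr rfl hterm, Finset.sum_sub_distrib, ← Finset.sum_filter,
    internal_total S S.card rfl h2s]
  ring


theorem shapley_owen_coop_unanimity_straddling {ι : Type*} [DecidableEq ι]
    (N C S : Finset ι) (s r c : ℕ)
    (hCN : C ⊆ N) (hC : C ≠ ∅) (hCprop : C ≠ N) (hS : S ⊆ N)
    (hs : S.card = s) (hr : (S ∩ C).card = r) (hc : C.card = c)
    (h2s : 2 ≤ s) (h1r : 1 ≤ r) (hrs : r ≤ s - 1) :
    (∑ π ∈ (Pi2 S).filter (fun π => ∀ B ∈ π, B ∩ C ≠ ∅ ∧ B ∩ C ≠ S ∩ C), pperm S π)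
        = ((s : ℝ) + 1) * ((r : ℝ) - 1) / (((s : ℝ) - 1) * ((r : ℝ) + 1))
      ∧ coop (unanimity C) (pperm S) (qperm N S) N S
        = ((s : ℝ) + 1) * ((r : ℝ) - 1)
            / (((s : ℝ) - 1) * ((r : ℝ) + 1) * ((c : ℝ) - (r : ℝ) + 1)) := by

  classical
  have hrc : r ≤ c := by
    rw [← hr, ← hc]
    exact Finset.card_le_card Finset.inter_subset_right
  have hd : (C \ S).card = c - r := by
    have h1 := Finset.card_sdiff_add_card_inter C S
    rw [Finset.inter_comm, hr, hc] at h1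
    omega
  have hSCne : S ∩ C ≠ ∅ := by
    intro h
    rw [h, Finset.card_empty] at hr
    omega
  have part1 := internal_sum S C s r hs hr h2s h1r hrs
  refine ⟨part1, ?_⟩
  rw [coop,
    ← Finset.sum_filter_add_sum_filter_not ((N \ S).powerset) (fun T => C \ S ⊆ T)]
  have hz : ∑ T ∈ (N \ S).powerset.filter (fun T => ¬ C \ S ⊆ T),
      qperm N S T * attitude (unanimity C) (pperm S) S T = 0 := by
    apply Finset.sum_eq_zero
    intro T hTm
    simp only [Finset.mem_filter, Finset.mem_powerset] at hTm
    rw [att_zero N C S T _ hTm.1 hTm.2, mul_zero]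
  rw [hz, add_zero]
  have hone : ∀ T ∈ (N \ S).powerset.filter (fun T => C \ S ⊆ T),
      qperm N S T * attitude (unanimity C) (pperm S) S T
      = qperm N S T * (((s : ℝ) + 1) * ((r : ℝ) - 1) / (((s : ℝ) - 1) * ((r : ℝ) + 1))) := by
    intro T hTm
    simp only [Finset.mem_filter, Finset.mem_powerset] at hTm
    rw [att_one N C S T hTm.1 hTm.2 hSCne (by omega), part1]
  rw [Finset.sum_congr rfl hone, ← Finset.sum_mul,
    external_sum N S C (c - r) hS hCN hd]
  have hcr : ((c - r : ℕ) : ℝ) = (c : ℝ) - (r : ℝ) := Nat.cast_sub hrc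
  rw [hcr, one_div_mul_eq_div, div_div]
end
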